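/- arXiv:math/0405207 — 4 statements merged into one kernel-verified Lean document; each statement's English description precedes it below -/
import Mathlib

section
/- With the impulsive Volterra setup and the operator S_c as defined there, let h* := min_{1≤i≤N+1}(τ_i − τ_{i−1}) and for μ > 0 define ‖ξ‖_μ := sup_{0≤t≤T} e^{−μt}|ξ(t)| and ‖η‖_μ := max_{1≤i≤N} e^{−μτ_i}|η_i|. Then for every μ > 0 and all admissible pairs (ξ₁,η₁), (ξ₂,η₂): ‖S_c(ξ₁,η₁) − S_c(ξ₂,η₂)‖_μ ≤ C_f·((1 − e^{−μT})/μ)·‖ξ₁ − ξ₂‖_μ + C_G·(1 + e^{−μh*}·(1 − e^{−(N−1)μh*})/(1 − e^{−μh*}))·‖η₁ − η₂‖_μ. -/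
open Set Filter MeasureTheory

/-!
The common term `h` cancels, and the difference of the two images splits into a Volterra integral
and an impulse sum. In the integral, the Lipschitz bound and `‖ξ₁ t - ξ₂ t‖ ≤ e^{μt} ‖ξ₁ - ξ₂‖_μ`
give `‖∫₀ˢ …‖ ≤ C_f ‖ξ₁ - ξ₂‖_μ (e^{μs} - 1) / μ`, and the weight `e^{-μs}` turns this into at
most `C_f (1 - e^{-μT}) / μ`. In the sum, the `j`-th impulse carries the weight
`e^{-μ(s - τ_j)}`; if `τ_m` is the last impulse time before `s`, then `s - τ_j ≥ (m - j) h*`, so the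
weights are bounded by distinct powers of `r = e^{-μh*}` and add up to at most
`1 + r + ⋯ + r^{N-1} = 1 + r (1 - r^{N-1}) / (1 - r)`.
-/

noncomputable def weightedSupNorm {E : Type*} [Norm E] (μ T : ℝ) (φ : ℝ → E) : ℝ :=
  ⨆ t : Icc (0 : ℝ) T, Real.exp (-μ * t) * ‖φ t‖

theorem le_exp_mul_of_exp_neg_mul_le {c x y K : ℝ} (h : Real.exp (-c * x) * y ≤ K) :
    y ≤ Real.exp (c * x) * K :=
  calc y = Real.exp (c * x) * (Real.exp (-c * x) * y) := by
        rw [← mul_assoc, ← Real.exp_add, neg_mul, add_neg_cancel, Real.exp_zero, one_mul]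
    _ ≤ Real.exp (c * x) * K := mul_le_mul_of_nonneg_left h (Real.exp_pos _).le

section WeightedSupNorm

variable {E : Type*} [SeminormedAddCommGroup E] {μ T : ℝ} {φ : ℝ → E}

theorem weightedSupNorm_nonneg : 0 ≤ weightedSupNorm μ T φ :=
  Real.iSup_nonneg fun _ => by positivity

theorem norm_le_exp_mul_weightedSupNorm (hμ : 0 ≤ μ) (hφ : ∃ M, ∀ t ∈ Icc 0 T, ‖φ t‖ ≤ M)
    {t : ℝ} (ht : t ∈ Icc 0 T) : ‖φ t‖ ≤ Real.exp (μ * t) * weightedSupNorm μ T φ := by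
  obtain ⟨M, hM⟩ := hφ
  refine le_exp_mul_of_exp_neg_mul_le
    (le_ciSup (f := fun s : Icc (0 : ℝ) T => Real.exp (-μ * s) * ‖φ s‖) ⟨M, ?_⟩ ⟨t, ht⟩)
  rintro _ ⟨s, rfl⟩
  have hexp : Real.exp (-μ * s) ≤ 1 := Real.exp_le_one_iff.2 (by nlinarith [s.2.1])
  exact (mul_le_of_le_one_left (norm_nonneg _) hexp).trans (hM s s.2)

end WeightedSupNorm

theorem nonneg_of_norm_sub_le_mul_norm_sub {E F : Type*} [NormedAddCommGroup E] [Nontrivial E]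
    [SeminormedAddCommGroup F] {g : E → F} {C : ℝ} (h : ∀ x y, ‖g x - g y‖ ≤ C * ‖x - y‖) :
    0 ≤ C := by
  obtain ⟨x, hx⟩ := exists_ne (0 : E)
  exact nonneg_of_mul_nonneg_left ((norm_nonneg _).trans (h x 0))
    (norm_pos_iff.2 (sub_ne_zero.2 hx))

theorem Icc_subset_image_union_biUnion_Ioo (τ : ℕ → ℝ) (k : ℕ) :
    Icc (τ 0) (τ k) ⊆ τ '' Iic k ∪ ⋃ i ∈ Finset.Icc 1 k, Ioo (τ (i - 1)) (τ i) := by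
  induction k with
  | zero => exact fun t ht => Or.inl ⟨0, mem_Iic.2 le_rfl, le_antisymm ht.1 ht.2⟩
  | succ k ih =>
    intro t ht
    simp only [mem_union, mem_image, mem_Iic, mem_iUnion₂, Finset.mem_Icc, exists_prop]
    rcases le_or_gt t (τ k) with htk | htk
    · have hmem := ih ⟨ht.1, htk⟩
      simp only [mem_union, mem_image, mem_Iic, mem_iUnion₂, Finset.mem_Icc, exists_prop] at hmem
      rcases hmem with ⟨j, hj, rfl⟩ | ⟨i, hi, hti⟩
      · exact Or.inl ⟨j, hj.trans k.le_succ, rfl⟩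
      · exact Or.inr ⟨i, ⟨hi.1, hi.2.trans k.le_succ⟩, hti⟩
    · rcases ht.2.eq_or_lt with rfl | htk'
      · exact Or.inl ⟨k + 1, le_rfl, rfl⟩
      · exact Or.inr ⟨k + 1, ⟨k.succ_pos, le_rfl⟩, by simpa using htk, htk'⟩

theorem ae_exists_mem_Ioo_of_mem_Icc (τ : ℕ → ℝ) (k : ℕ) :
    ∀ᵐ t, t ∈ Icc (τ 0) (τ k) → ∃ i ∈ Finset.Icc 1 k, t ∈ Ioo (τ (i - 1)) (τ i) := by
  have hnull : volume (τ '' Iic k) = 0 := ((finite_Iic k).image τ).measure_zero volume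
  filter_upwards [measure_eq_zero_iff_ae_notMem.1 hnull] with t ht hmem
  simpa only [mem_iUnion₂, exists_prop] using
    (Icc_subset_image_union_biUnion_Ioo τ k hmem).resolve_left ht

theorem integrableOn_of_integrableOn_inter_Ioo {E : Type*} [NormedAddCommGroup E] {g : ℝ → E}
    (τ : ℕ → ℝ) (k : ℕ) {S : Set ℝ} (hS : S ⊆ Icc (τ 0) (τ k))
    (hg : ∀ i ∈ Finset.Icc 1 k, IntegrableOn g (S ∩ Ioo (τ (i - 1)) (τ i))) :
    IntegrableOn g S := by
  refine (integrableOn_finset_iUnion.2 hg).mono_set_ae ?_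
  filter_upwards [ae_exists_mem_Ioo_of_mem_Icc τ k] with t ht htS
  obtain ⟨i, hi, hti⟩ := ht (hS htS)
  exact mem_iUnion₂.2 ⟨i, hi, htS, hti⟩

theorem IsCompact.integrableOn_comp {X E : Type*} [TopologicalSpace X] [NormedAddCommGroup E]
    {g : X → E} {φ : ℝ → X} {K : Set X} {P : Set ℝ} (hK : IsCompact K) (hg : ContinuousOn g K)
    (hφ : ContinuousOn φ P) (hφK : MapsTo φ P K) (hP : MeasurableSet P) (hPfin : volume P < ⊤) :
    IntegrableOn (g ∘ φ) P := by
  obtain ⟨C, hC⟩ := hK.exists_bound_of_continuousOn hg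
  exact .of_bound hPfin ((hg.comp hφ hφK).aestronglyMeasurable hP) C
    ((ae_restrict_iff' hP).2 (ae_of_all _ fun t ht => hC _ (hφK ht)))

theorem integral_exp_mul {μ : ℝ} (hμ : μ ≠ 0) (s : ℝ) :
    ∫ t in (0 : ℝ)..s, Real.exp (μ * t) = (Real.exp (μ * s) - 1) / μ := by
  rw [intervalIntegral.integral_comp_mul_left Real.exp hμ, integral_exp, mul_zero, Real.exp_zero,
    smul_eq_mul, inv_mul_eq_div]

theorem exp_neg_mul_norm_integral_sub_le {E : Type*} [NormedAddCommGroup E] [NormedSpace ℝ E]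
    {g₁ g₂ : ℝ → E} {C μ s T : ℝ} (hμ : 0 < μ) (hC : 0 ≤ C) (hs : s ∈ Icc 0 T)
    (h₁ : IntervalIntegrable g₁ volume 0 s) (h₂ : IntervalIntegrable g₂ volume 0 s)
    (hle : ∀ᵐ t, t ∈ Ioc 0 s → ‖g₁ t - g₂ t‖ ≤ C * Real.exp (μ * t)) :
    Real.exp (-μ * s) * ‖(∫ t in (0 : ℝ)..s, g₁ t) - ∫ t in (0 : ℝ)..s, g₂ t‖ ≤
      C * ((1 - Real.exp (-μ * T)) / μ) := by
  have hint : ‖(∫ t in (0 : ℝ)..s, g₁ t) - ∫ t in (0 : ℝ)..s, g₂ t‖ ≤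
      C * ((Real.exp (μ * s) - 1) / μ) := by
    rw [← intervalIntegral.integral_sub h₁ h₂, ← integral_exp_mul hμ.ne',
      ← intervalIntegral.integral_const_mul]
    exact intervalIntegral.norm_integral_le_of_norm_le hs.1 hle
      ((by fun_prop : Continuous fun t => C * Real.exp (μ * t)).intervalIntegrable _ _)
  have hinv : Real.exp (-μ * s) * Real.exp (μ * s) = 1 := by
    rw [← Real.exp_add, neg_mul, neg_add_cancel, Real.exp_zero]
  have hexp : Real.exp (-μ * T) ≤ Real.exp (-μ * s) := Real.exp_le_exp.2 (by nlinarith [hs.2])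
  calc _ ≤ Real.exp (-μ * s) * (C * ((Real.exp (μ * s) - 1) / μ)) := by gcongr
    _ = C * ((Real.exp (-μ * s) * Real.exp (μ * s) - Real.exp (-μ * s)) / μ) := by ring
    _ = C * ((1 - Real.exp (-μ * s)) / μ) := by rw [hinv]
    _ ≤ C * ((1 - Real.exp (-μ * T)) / μ) := by gcongr

theorem geom_sum_range_eq_one_add {K : Type*} [Field K] {r : K} (hr : r ≠ 1) {N : ℕ} (hN : 1 ≤ N) :
    ∑ d ∈ Finset.range N, r ^ d = 1 + r * (1 - r ^ (N - 1)) / (1 - r) := by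
  obtain ⟨k, rfl⟩ := Nat.exists_eq_add_of_le' hN
  rw [Finset.sum_range_succ', Nat.add_sub_cancel, pow_zero]
  simp only [pow_succ, ← Finset.sum_mul]
  rw [geom_sum_eq hr]
  field_simp
  ring

theorem natCast_sub_mul_le_sub_of_forall_le_sub {τ : ℕ → ℝ} {δ : ℝ} {j k : ℕ} (hjk : j ≤ k)
    (h : ∀ i, j < i → i ≤ k → δ ≤ τ i - τ (i - 1)) : ((k - j : ℕ) : ℝ) * δ ≤ τ k - τ j := by
  induction k, hjk using Nat.le_induction with
  | base => simp
  | succ k hjk ih =>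
    have hstep := h (k + 1) (by omega) le_rfl
    have ih' := ih fun i hji hik => h i hji (hik.trans k.le_succ)
    rw [Nat.add_sub_cancel] at hstep
    rw [Nat.succ_sub hjk, Nat.cast_succ]
    linarith

theorem sum_exp_neg_mul_sub_le_geom_sum {τ : ℕ → ℝ} {μ δ s : ℝ} {N : ℕ} (hμ : 0 ≤ μ)
    (hgap : ∀ i, 1 ≤ i → i ≤ N → δ ≤ τ i - τ (i - 1)) :
    ∑ j ∈ (Finset.Icc 1 N).filter (fun j => τ j < s), Real.exp (-μ * (s - τ j)) ≤
      ∑ d ∈ Finset.range N, Real.exp (-μ * δ) ^ d := by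
  set J := (Finset.Icc 1 N).filter (fun j => τ j < s)
  have hgeom_nonneg : 0 ≤ ∑ d ∈ Finset.range N, Real.exp (-μ * δ) ^ d :=
    Finset.sum_nonneg fun _ _ => by positivity
  rcases J.eq_empty_or_nonempty with hJ | hJ
  · rwa [hJ, Finset.sum_empty]
  set m := J.max' hJ
  have hmJ : m ∈ J := J.max'_mem hJ
  simp only [J, Finset.mem_filter, Finset.mem_Icc] at hmJ
  have hmem : ∀ j ∈ J, 1 ≤ j ∧ j ≤ m := fun j hj =>
    ⟨(Finset.mem_Icc.1 (Finset.mem_filter.1 hj).1).1, J.le_max' j hj⟩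
  calc ∑ j ∈ J, Real.exp (-μ * (s - τ j))
      ≤ ∑ j ∈ J, Real.exp (-μ * δ) ^ (m - j) := Finset.sum_le_sum fun j hj => by
        have hjm := natCast_sub_mul_le_sub_of_forall_le_sub (hmem j hj).2
          fun i hji him => hgap i (by omega) (him.trans hmJ.1.2)
        rw [← Real.exp_nat_mul, Real.exp_le_exp]
        nlinarith
    _ = ∑ d ∈ J.image (m - ·), Real.exp (-μ * δ) ^ d := by
        refine (Finset.sum_image fun i hi j hj hij => ?_).symm
        have := hmem i hi; have := hmem j hj
        omega
    _ ≤ ∑ d ∈ Finset.range N, Real.exp (-μ * δ) ^ d := by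
        refine Finset.sum_le_sum_of_subset_of_nonneg (fun d hd => ?_) fun _ _ _ => by positivity
        obtain ⟨j, hj, rfl⟩ := Finset.mem_image.1 hd
        have := hmem j hj
        exact Finset.mem_range.2 (by omega)

theorem exp_neg_mul_norm_sum_le {E : Type*} [SeminormedAddCommGroup E] {v : ℕ → E} {τ : ℕ → ℝ}
    {μ δ s C : ℝ} {N : ℕ} (hμ : 0 ≤ μ) (hC : 0 ≤ C)
    (hgap : ∀ i, 1 ≤ i → i ≤ N → δ ≤ τ i - τ (i - 1))
    (hv : ∀ j ∈ Finset.Icc 1 N, τ j < s → ‖v j‖ ≤ C * Real.exp (μ * τ j)) :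
    Real.exp (-μ * s) * ‖∑ j ∈ (Finset.Icc 1 N).filter (fun j => τ j < s), v j‖ ≤
      C * ∑ d ∈ Finset.range N, Real.exp (-μ * δ) ^ d := by
  set J := (Finset.Icc 1 N).filter (fun j => τ j < s)
  calc Real.exp (-μ * s) * ‖∑ j ∈ J, v j‖
      ≤ Real.exp (-μ * s) * ∑ j ∈ J, C * Real.exp (μ * τ j) := by
        gcongr
        refine (norm_sum_le _ _).trans (Finset.sum_le_sum fun j hj => ?_)
        exact hv j (Finset.mem_filter.1 hj).1 (Finset.mem_filter.1 hj).2
    _ = C * ∑ j ∈ J, Real.exp (-μ * (s - τ j)) := by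
        rw [Finset.mul_sum, Finset.mul_sum]
        refine Finset.sum_congr rfl fun j _ => ?_
        rw [mul_left_comm, ← Real.exp_add]
        ring_nf
    _ ≤ C * ∑ d ∈ Finset.range N, Real.exp (-μ * δ) ^ d := by
        gcongr
        exact sum_exp_neg_mul_sub_le_geom_sum hμ hgap

section VolterraOperator

variable {E A F : Type*} [NormedAddCommGroup E] [NormedAddCommGroup F]
  {T s : ℝ} {k : ℕ} {τ : ℕ → ℝ} {U : Set A} {a : ℕ → A} {u : ℝ → A}

theorem intervalIntegrable_volterra_integrand [TopologicalSpace A] [ProperSpace E]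
    {f : ℝ → ℝ → E → A → F} {ξ : ℝ → E} (hτ0 : τ 0 = 0) (hτk : τ k = T)
    (haU : ∀ i, 1 ≤ i → i ≤ k → a i ∈ U)
    (hu : ∀ i, 1 ≤ i → i ≤ k → ∀ t ∈ Ico (τ (i - 1)) (τ i), u t = a i)
    (hf : ContinuousOn (fun p : (ℝ × ℝ) × E × A => f p.1.1 p.1.2 p.2.1 p.2.2)
      ({st : ℝ × ℝ | 0 ≤ st.2 ∧ st.2 ≤ st.1 ∧ st.1 ≤ T} ×ˢ (univ ×ˢ U)))
    (hξ : ∀ i, 1 ≤ i → i ≤ k → ContinuousOn ξ (Ioo (τ (i - 1)) (τ i)))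
    (hbdd : ∃ M, ∀ t ∈ Icc 0 T, ‖ξ t‖ ≤ M) (hs : s ∈ Icc 0 T) :
    IntervalIntegrable (fun t => f s t (ξ t) (u t)) volume 0 s := by
  obtain ⟨M, hM⟩ := hbdd
  rw [intervalIntegrable_iff_integrableOn_Ioc_of_le hs.1]
  refine integrableOn_of_integrableOn_inter_Ioo τ k (fun t ht => ?_) fun i hi => ?_
  · rw [hτ0, hτk]
    exact ⟨ht.1.le, ht.2.trans hs.2⟩
  obtain ⟨hi₁, hik⟩ := Finset.mem_Icc.1 hi
  have hP : MeasurableSet (Ioc 0 s ∩ Ioo (τ (i - 1)) (τ i)) :=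
    measurableSet_Ioc.inter measurableSet_Ioo
  refine IntegrableOn.congr_fun (f := (fun p : (ℝ × ℝ) × E × A => f p.1.1 p.1.2 p.2.1 p.2.2) ∘
    fun t => ((s, t), ξ t, a i)) ?_
    (fun t ht => by simp [hu i hi₁ hik t (Ioo_subset_Ico_self ht.2)]) hP
  refine IsCompact.integrableOn_comp (K := ({s} ×ˢ Icc 0 s) ×ˢ (Metric.closedBall 0 M ×ˢ {a i}))
    ((isCompact_singleton.prod isCompact_Icc).prod
      ((isCompact_closedBall _ _).prod isCompact_singleton)) (hf.mono ?_) ?_ ?_ hP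
    (measure_mono inter_subset_left |>.trans_lt measure_Ioc_lt_top)
  · rintro ⟨⟨s', t⟩, x, α⟩ ⟨⟨rfl, ht⟩, -, rfl⟩
    exact ⟨⟨ht.1, ht.2, hs.2⟩, mem_univ _, haU i hi₁ hik⟩
  · exact (continuousOn_const.prodMk continuousOn_id).prodMk
      (((hξ i hi₁ hik).mono inter_subset_right).prodMk continuousOn_const)
  · intro t ht
    exact ⟨⟨rfl, ht.1.1.le, ht.1.2⟩,
      mem_closedBall_zero_iff.2 (hM t ⟨ht.1.1.le, ht.1.2.trans hs.2⟩), rfl⟩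

theorem exp_neg_mul_norm_volterra_integral_sub_le [TopologicalSpace A] [ProperSpace E]
    [NormedSpace ℝ F] {f : ℝ → ℝ → E → A → F} {μ Cf : ℝ} {ξ₁ ξ₂ : ℝ → E} (hτ0 : τ 0 = 0)
    (hτk : τ k = T) (haU : ∀ i, 1 ≤ i → i ≤ k → a i ∈ U)
    (hu : ∀ i, 1 ≤ i → i ≤ k → ∀ t ∈ Ico (τ (i - 1)) (τ i), u t = a i)
    (hf : ContinuousOn (fun p : (ℝ × ℝ) × E × A => f p.1.1 p.1.2 p.2.1 p.2.2)
      ({st : ℝ × ℝ | 0 ≤ st.2 ∧ st.2 ≤ st.1 ∧ st.1 ≤ T} ×ˢ (univ ×ˢ U)))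
    (hCf : 0 ≤ Cf)
    (hfLip : ∀ t, 0 ≤ t → t ≤ s → ∀ α ∈ U, ∀ x₁ x₂, ‖f s t x₁ α - f s t x₂ α‖ ≤ Cf * ‖x₁ - x₂‖)
    (hμ : 0 < μ) (hξ₁ : ∀ i, 1 ≤ i → i ≤ k → ContinuousOn ξ₁ (Ioo (τ (i - 1)) (τ i)))
    (hξ₂ : ∀ i, 1 ≤ i → i ≤ k → ContinuousOn ξ₂ (Ioo (τ (i - 1)) (τ i)))
    (hbdd₁ : ∃ M, ∀ t ∈ Icc 0 T, ‖ξ₁ t‖ ≤ M) (hbdd₂ : ∃ M, ∀ t ∈ Icc 0 T, ‖ξ₂ t‖ ≤ M)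
    (hs : s ∈ Icc 0 T) :
    Real.exp (-μ * s) *
        ‖(∫ t in (0 : ℝ)..s, f s t (ξ₁ t) (u t)) - ∫ t in (0 : ℝ)..s, f s t (ξ₂ t) (u t)‖ ≤
      Cf * ((1 - Real.exp (-μ * T)) / μ) * weightedSupNorm μ T fun t => ξ₁ t - ξ₂ t := by
  obtain ⟨M₁, hM₁⟩ := hbdd₁
  obtain ⟨M₂, hM₂⟩ := hbdd₂
  have hbdd : ∃ M, ∀ t ∈ Icc 0 T, ‖ξ₁ t - ξ₂ t‖ ≤ M :=
    ⟨M₁ + M₂, fun t ht => (norm_sub_le _ _).trans (add_le_add (hM₁ t ht) (hM₂ t ht))⟩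
  rw [mul_right_comm]
  refine exp_neg_mul_norm_integral_sub_le hμ (mul_nonneg hCf weightedSupNorm_nonneg) hs
    (intervalIntegrable_volterra_integrand hτ0 hτk haU hu hf hξ₁ ⟨M₁, hM₁⟩ hs)
    (intervalIntegrable_volterra_integrand hτ0 hτk haU hu hf hξ₂ ⟨M₂, hM₂⟩ hs) ?_
  filter_upwards [ae_exists_mem_Ioo_of_mem_Icc τ k] with t hpiece ht
  obtain ⟨i, hi, hti⟩ := hpiece (by rw [hτ0, hτk]; exact ⟨ht.1.le, ht.2.trans hs.2⟩)
  obtain ⟨hi₁, hik⟩ := Finset.mem_Icc.1 hi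
  rw [hu i hi₁ hik t (Ioo_subset_Ico_self hti)]
  calc _ ≤ Cf * ‖ξ₁ t - ξ₂ t‖ := hfLip t ht.1.le ht.2 _ (haU i hi₁ hik) _ _
    _ ≤ Cf * (Real.exp (μ * t) * weightedSupNorm μ T fun t => ξ₁ t - ξ₂ t) := by
      gcongr
      exact norm_le_exp_mul_weightedSupNorm hμ.le hbdd ⟨ht.1.le, ht.2.trans hs.2⟩
    _ = _ := by ring

theorem exp_neg_mul_norm_impulse_sum_sub_le {G : ℝ → ℝ → E → A → A → F} {η₁ η₂ : ℕ → E}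
    {N : ℕ} {μ δ CG : ℝ} (hN : 1 ≤ N) (haU : ∀ i, 1 ≤ i → i ≤ N + 1 → a i ∈ U)
    (hτ : ∀ j, 1 ≤ j → j ≤ N → 0 ≤ τ j) (hgap : ∀ i, 1 ≤ i → i ≤ N → δ ≤ τ i - τ (i - 1))
    (hCG : 0 ≤ CG) (hGLip : ∀ t, 0 ≤ t → t ≤ s → ∀ α ∈ U, ∀ β ∈ U, ∀ x₁ x₂,
      ‖G s t x₁ α β - G s t x₂ α β‖ ≤ CG * ‖x₁ - x₂‖) (hμ : 0 ≤ μ) :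
    Real.exp (-μ * s) * ‖∑ j ∈ (Finset.Icc 1 N).filter (fun j => τ j < s),
        (G s (τ j) (η₁ j) (a j) (a (j + 1)) - G s (τ j) (η₂ j) (a j) (a (j + 1)))‖ ≤
      CG * (∑ d ∈ Finset.range N, Real.exp (-μ * δ) ^ d) *
        (Finset.Icc 1 N).sup' (Finset.nonempty_Icc.mpr hN)
          (fun i => Real.exp (-μ * τ i) * ‖η₁ i - η₂ i‖) := by
  set H := (Finset.Icc 1 N).sup' (Finset.nonempty_Icc.mpr hN)
    fun i => Real.exp (-μ * τ i) * ‖η₁ i - η₂ i‖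
  have hH0 : 0 ≤ H := Finset.le_sup'_of_le (fun i => Real.exp (-μ * τ i) * ‖η₁ i - η₂ i‖)
    (Finset.mem_Icc.2 ⟨le_rfl, hN⟩) (by positivity)
  refine (exp_neg_mul_norm_sum_le hμ (mul_nonneg hCG hH0) hgap fun j hj hjs => ?_).trans_eq
    (mul_right_comm _ _ _)
  obtain ⟨hj₁, hjN⟩ := Finset.mem_Icc.1 hj
  calc _ ≤ CG * ‖η₁ j - η₂ j‖ := hGLip (τ j) (hτ j hj₁ hjN) hjs.le _
          (haU j hj₁ (by omega)) _ (haU (j + 1) (by omega) (by omega)) _ _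
    _ ≤ CG * (Real.exp (μ * τ j) * H) := by
      gcongr
      exact le_exp_mul_of_exp_neg_mul_le
        (Finset.le_sup' (fun i => Real.exp (-μ * τ i) * ‖η₁ i - η₂ i‖) hj)
    _ = CG * H * Real.exp (μ * τ j) := by ring

end VolterraOperator

/-- **Lemma 3.2, continuous component.** With `h* = min (τ_i − τ_{i−1})` and the weighted norms
`‖ξ‖_μ = sup_{0≤t≤T} e^{−μt}|ξ(t)|`, `‖η‖_μ = max_{1≤i≤N} e^{−μτ_i}|η_i|`, the continuous
component `S_c` of the fixed-point operator satisfies, for every `μ > 0`,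
`‖S_c(ξ₁,η₁) − S_c(ξ₂,η₂)‖_μ ≤ C_f (1−e^{−μT})/μ ‖ξ₁−ξ₂‖_μ
  + C_G (1 + e^{−μh*}(1−e^{−(N−1)μh*})/(1−e^{−μh*})) ‖η₁−η₂‖_μ`. -/
theorem Sc_weighted_norm_estimate
    (n m N : ℕ) (hN : 1 ≤ N) (T : ℝ) (hT : 0 < T)
    (τ : ℕ → ℝ) (hτ0 : τ 0 = 0) (hτT : τ (N + 1) = T)
    (hτmono : ∀ i j : ℕ, i < j → j ≤ N + 1 → τ i < τ j)
    (U : Set (Fin m → ℝ)) (a : ℕ → (Fin m → ℝ)) (haU : ∀ i, 1 ≤ i → i ≤ N + 1 → a i ∈ U)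
    (u : ℝ → (Fin m → ℝ))
    (hu : ∀ i, 1 ≤ i → i ≤ N + 1 → ∀ t ∈ Ico (τ (i - 1)) (τ i), u t = a i)
    (h : ℝ → EuclideanSpace ℝ (Fin n))
    (f : ℝ → ℝ → EuclideanSpace ℝ (Fin n) → (Fin m → ℝ) → EuclideanSpace ℝ (Fin n))
    (G : ℝ → ℝ → EuclideanSpace ℝ (Fin n) → (Fin m → ℝ) → (Fin m → ℝ) →
      EuclideanSpace ℝ (Fin n))
    (hf : ContinuousOn
      (fun p : (ℝ × ℝ) × EuclideanSpace ℝ (Fin n) × (Fin m → ℝ) => f p.1.1 p.1.2 p.2.1 p.2.2)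
      (({st : ℝ × ℝ | 0 ≤ st.2 ∧ st.2 ≤ st.1 ∧ st.1 ≤ T}) ×ˢ ((univ : Set _) ×ˢ U)))
    (Cf CG : ℝ)
    (hfLip : ∀ s t : ℝ, 0 ≤ t → t ≤ s → s ≤ T → ∀ α ∈ U,
      ∀ x₁ x₂ : EuclideanSpace ℝ (Fin n), ‖f s t x₁ α - f s t x₂ α‖ ≤ Cf * ‖x₁ - x₂‖)
    (hGLip : ∀ s t : ℝ, 0 ≤ t → t ≤ s → s ≤ T → ∀ α ∈ U, ∀ β ∈ U,
      ∀ x₁ x₂ : EuclideanSpace ℝ (Fin n), ‖G s t x₁ α β - G s t x₂ α β‖ ≤ CG * ‖x₁ - x₂‖)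
    (μ : ℝ) (hμ : 0 < μ)
    -- the two admissible pairs `(ξ₁,η₁)`, `(ξ₂,η₂)`:
    (ξ₁ ξ₂ : ℝ → EuclideanSpace ℝ (Fin n)) (η₁ η₂ : ℕ → EuclideanSpace ℝ (Fin n))
    (hbdd₁ : ∃ M : ℝ, ∀ t ∈ Icc 0 T, ‖ξ₁ t‖ ≤ M)
    (hbdd₂ : ∃ M : ℝ, ∀ t ∈ Icc 0 T, ‖ξ₂ t‖ ≤ M)
    (hcont₁ : ∀ i, 1 ≤ i → i ≤ N + 1 → ContinuousOn ξ₁ (Ioo (τ (i - 1)) (τ i)))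
    (hcont₂ : ∀ i, 1 ≤ i → i ≤ N + 1 → ContinuousOn ξ₂ (Ioo (τ (i - 1)) (τ i))) :
    -- the continuous-component estimate with the explicit constants `a₁₁(μ)`, `a₁₂(μ)` of (3.5)
    (⨆ s : Icc (0:ℝ) T, Real.exp (-μ * s) *
        ‖(h s + (∫ t in (0:ℝ)..(s:ℝ), f s t (ξ₁ t) (u t)) +
            ∑ j ∈ (Finset.Icc 1 N).filter (fun j => τ j < (s:ℝ)),
              G s (τ j) (η₁ j) (a j) (a (j + 1))) -
          (h s + (∫ t in (0:ℝ)..(s:ℝ), f s t (ξ₂ t) (u t)) +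
            ∑ j ∈ (Finset.Icc 1 N).filter (fun j => τ j < (s:ℝ)),
              G s (τ j) (η₂ j) (a j) (a (j + 1)))‖)
    ≤ Cf * ((1 - Real.exp (-μ * T)) / μ) *
        (⨆ t : Icc (0:ℝ) T, Real.exp (-μ * t) * ‖ξ₁ t - ξ₂ t‖) +
      CG * (1 + Real.exp (-μ * ((Finset.Icc 1 (N + 1)).inf'
            (Finset.nonempty_Icc.mpr (by omega)) (fun i => τ i - τ (i - 1)))) *
          (1 - Real.exp (-((N : ℝ) - 1) * μ * ((Finset.Icc 1 (N + 1)).inf'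
            (Finset.nonempty_Icc.mpr (by omega)) (fun i => τ i - τ (i - 1))))) /
          (1 - Real.exp (-μ * ((Finset.Icc 1 (N + 1)).inf'
            (Finset.nonempty_Icc.mpr (by omega)) (fun i => τ i - τ (i - 1)))))) *
        ((Finset.Icc 1 N).sup' (Finset.nonempty_Icc.mpr hN)
          (fun i => Real.exp (-μ * τ i) * ‖η₁ i - η₂ i‖)) := by
  have : Nonempty (Icc (0 : ℝ) T) := (nonempty_Icc.2 hT.le).to_subtype
  -- In dimension 0 both sides vanish; otherwise the Lipschitz constants are nonnegative.
  rcases subsingleton_or_nontrivial (EuclideanSpace ℝ (Fin n)) with hE | hE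
  · simp only [norm_of_subsingleton, mul_zero, ciSup_const, Finset.sup'_const, add_zero, le_refl]
  have haU₁ : a 1 ∈ U := haU 1 le_rfl (by omega)
  have hCf := nonneg_of_norm_sub_le_mul_norm_sub (hfLip T 0 le_rfl hT.le le_rfl (a 1) haU₁)
  have hCG := nonneg_of_norm_sub_le_mul_norm_sub
    (hGLip T 0 le_rfl hT.le le_rfl (a 1) haU₁ (a 1) haU₁)
  set hstar := (Finset.Icc 1 (N + 1)).inf' (Finset.nonempty_Icc.mpr (by omega))
    (fun i => τ i - τ (i - 1))
  have hstar_pos : 0 < hstar := (Finset.lt_inf'_iff _).2 fun i hi => by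
    obtain ⟨hi₁, hi₂⟩ := Finset.mem_Icc.1 hi
    exact sub_pos.2 (hτmono _ _ (by omega) hi₂)
  have hr : Real.exp (-μ * hstar) ≠ 1 := (Real.exp_lt_one_iff.2 (by nlinarith)).ne
  rw [show Real.exp (-((N : ℝ) - 1) * μ * hstar) = Real.exp (-μ * hstar) ^ (N - 1) by
      rw [← Real.exp_nat_mul, Nat.cast_sub hN]; ring_nf,
    ← geom_sum_range_eq_one_add hr hN]
  refine ciSup_le fun ⟨s, hs⟩ => ?_
  rw [add_sub_add_comm, add_sub_add_left_eq_sub, ← Finset.sum_sub_distrib]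
  refine (mul_le_mul_of_nonneg_left (norm_add_le _ _) (Real.exp_pos _).le).trans ?_
  rw [mul_add]
  exact add_le_add
    (exp_neg_mul_norm_volterra_integral_sub_le hτ0 hτT haU hu hf hCf
      (fun t h₀ h₁ => hfLip s t h₀ h₁ hs.2) hμ hcont₁ hcont₂ hbdd₁ hbdd₂ hs)
    (exp_neg_mul_norm_impulse_sum_sub_le hN haU (fun j hj _ => hτ0 ▸ (hτmono 0 j hj (by omega)).le)
      (fun i hi₁ hiN => Finset.inf'_le _ (Finset.mem_Icc.2 ⟨hi₁, by omega⟩)) hCG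
      (fun t h₀ h₁ => hGLip s t h₀ h₁ hs.2) hμ.le)
end

section
/- Let T > 0, N ≥ 1, C_f ≥ 0, C_G ≥ 0, 0 < τ_N ≤ T and h* > 0. For μ > 0 define a₁₁(μ) := C_f(1 − e^{−μT})/μ, a₁₂(μ) := C_G(1 + e^{−μh*}(1 − e^{−(N−1)μh*})/(1 − e^{−μh*})), a₂₁(μ) := C_f(1 − e^{−μτ_N})/μ, a₂₂(μ) := C_G e^{−μh*}(1 − e^{−μ(N−1)h*})/(1 − e^{−μh*}), and let A(μ) be the real 2×2 matrix with these entries. Then a₁₁(μ) → 0, a₂₁(μ) → 0, a₂₂(μ) → 0 as μ → ∞ while a₁₂(μ) remains bounded, and consequently there exists μ₀ > 0 such that for all μ ≥ μ₀ the matrix A(μ) satisfies |trace A(μ)| − 1 < det A(μ) < 1. -/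
/-! Every entry of `A(μ)` other than `a₁₂(μ)` carries a factor `1/μ` or `e^{−μh*}`, so
`A(μ)` tends to the nilpotent matrix `!![0, C_G; 0, 0]`, whose trace and determinant vanish.
The stability region `|trace| − 1 < det < 1` is open and contains that limit. -/

open Filter

/-- The contraction matrix `A(μ)` with the entries `a₁₁(μ), a₁₂(μ), a₂₁(μ), a₂₂(μ)`
of equation (3.5):
`a₁₁(μ) = C_f (1−e^{−μT})/μ`, `a₁₂(μ) = C_G (1 + e^{−μh*}(1−e^{−(N−1)μh*})/(1−e^{−μh*}))`,
`a₂₁(μ) = C_f (1−e^{−μτ_N})/μ`, `a₂₂(μ) = C_G e^{−μh*}(1−e^{−μ(N−1)h*})/(1−e^{−μh*})`. -/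
noncomputable def contractionMatrix (T τN hstar Cf CG : ℝ) (N : ℕ) (μ : ℝ) :
    Matrix (Fin 2) (Fin 2) ℝ :=
  !![Cf * ((1 - Real.exp (-μ * T)) / μ),
     CG * (1 + Real.exp (-μ * hstar) *
       ((1 - Real.exp (-((N : ℝ) - 1) * μ * hstar)) / (1 - Real.exp (-μ * hstar))));
     Cf * ((1 - Real.exp (-μ * τN)) / μ),
     CG * (Real.exp (-μ * hstar) *
       ((1 - Real.exp (-μ * ((N : ℝ) - 1) * hstar)) / (1 - Real.exp (-μ * hstar))))]

open Topology Real

section ExpDecay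

variable {c : ℝ}

theorem tendsto_exp_neg_mul_atTop_nhds_zero (hc : 0 < c) :
    Tendsto (fun μ : ℝ => exp (-μ * c)) atTop (𝓝 0) := by
  simpa only [neg_mul, Function.comp_def] using
    tendsto_exp_neg_atTop_nhds_zero.comp (tendsto_id.atTop_mul_const hc : Tendsto (· * c) _ _)

theorem tendsto_one_sub_exp_neg_mul_div_atTop (hc : 0 < c) :
    Tendsto (fun μ : ℝ => (1 - exp (-μ * c)) / μ) atTop (𝓝 0) := by
  simpa only [div_eq_mul_inv, mul_zero] using
    (tendsto_const_nhds.sub (tendsto_exp_neg_mul_atTop_nhds_zero hc)).mul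
      tendsto_inv_atTop_zero

theorem exists_tendsto_exp_neg_mul_atTop (hc : 0 ≤ c) :
    ∃ L, Tendsto (fun μ : ℝ => exp (-μ * c)) atTop (𝓝 L) := by
  have hanti : Antitone fun μ : ℝ => exp (-μ * c) := fun a b hab =>
    exp_le_exp.2 (by nlinarith)
  exact ⟨_, tendsto_atTop_ciInf hanti ⟨0, Set.forall_mem_range.2 fun μ => (exp_pos _).le⟩⟩

theorem tendsto_exp_neg_mul_mul_div_one_sub_exp_neg_mul {h : ℝ} (hh : 0 < h) (hc : 0 ≤ c) :
    Tendsto (fun μ : ℝ => exp (-μ * h) * ((1 - exp (-μ * c)) / (1 - exp (-μ * h))))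
      atTop (𝓝 0) := by
  obtain ⟨L, hL⟩ := exists_tendsto_exp_neg_mul_atTop hc
  have hexp := tendsto_exp_neg_mul_atTop_nhds_zero hh
  have hden : Tendsto (fun μ : ℝ => 1 - exp (-μ * h)) atTop (𝓝 1) := by
    simpa only [sub_zero] using tendsto_const_nhds.sub hexp
  have hratio : Tendsto (fun μ : ℝ => (1 - exp (-μ * c)) / (1 - exp (-μ * h))) atTop
      (𝓝 ((1 - L) / 1)) :=
    (tendsto_const_nhds.sub hL).div hden one_ne_zero
  simpa only [zero_mul] using hexp.mul hratio

end ExpDecay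

theorem Matrix.eventually_abs_trace_sub_one_lt_det_lt_one {ι n : Type*} [Fintype n]
    [DecidableEq n] {l : Filter ι} {A : ι → Matrix n n ℝ} {M : Matrix n n ℝ}
    (hA : Tendsto A l (𝓝 M)) (hM : |M.trace| - 1 < M.det ∧ M.det < 1) :
    ∀ᶠ i in l, |(A i).trace| - 1 < (A i).det ∧ (A i).det < 1 := by
  have htrace : Tendsto (fun i => (A i).trace) l (𝓝 M.trace) :=
    (continuous_id.matrix_trace.tendsto M).comp hA
  have hdet : Tendsto (fun i => (A i).det) l (𝓝 M.det) :=
    (continuous_id.matrix_det.tendsto M).comp hA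
  exact ((htrace.abs.sub_const 1).eventually_lt hdet hM.1).and
    (hdet.eventually_lt tendsto_const_nhds hM.2)

theorem tendsto_contractionMatrix_atTop {T τN hstar : ℝ} (Cf CG : ℝ) {N : ℕ}
    (hT : 0 < T) (hτN : 0 < τN) (hstar_pos : 0 < hstar) (hN : 1 ≤ N) :
    Tendsto (contractionMatrix T τN hstar Cf CG N) atTop (𝓝 !![0, CG; 0, 0]) := by
  have hc : 0 ≤ ((N : ℝ) - 1) * hstar :=
    mul_nonneg (sub_nonneg.2 (by exact_mod_cast hN)) hstar_pos.le
  have hgeom := tendsto_exp_neg_mul_mul_div_one_sub_exp_neg_mul hstar_pos hc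
  have hexponent₁ (μ : ℝ) : -((N : ℝ) - 1) * μ * hstar = -μ * (((N : ℝ) - 1) * hstar) := by ring
  have hexponent₂ (μ : ℝ) : -μ * ((N : ℝ) - 1) * hstar = -μ * (((N : ℝ) - 1) * hstar) := by ring
  refine tendsto_pi_nhds.2 fun i => tendsto_pi_nhds.2 fun j => ?_
  fin_cases i <;> fin_cases j <;> simp only [contractionMatrix, hexponent₁, hexponent₂]
  · simpa using (tendsto_one_sub_exp_neg_mul_div_atTop hT).const_mul Cf
  · simpa using (tendsto_const_nhds (x := (1 : ℝ)) |>.add hgeom).const_mul CG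
  · simpa using (tendsto_one_sub_exp_neg_mul_div_atTop hτN).const_mul Cf
  · simpa using hgeom.const_mul CG

theorem contraction_matrix_stable_for_large_mu_general
    (T : ℝ) (hT : 0 < T) (N : ℕ) (hN : 1 ≤ N)
    (Cf CG : ℝ)
    (τN : ℝ) (hτN : 0 < τN) (hstar : ℝ) (hhstar : 0 < hstar) :
    (Tendsto (fun μ : ℝ => contractionMatrix T τN hstar Cf CG N μ 0 0) atTop (nhds 0)) ∧
    (Tendsto (fun μ : ℝ => contractionMatrix T τN hstar Cf CG N μ 1 0) atTop (nhds 0)) ∧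
    (Tendsto (fun μ : ℝ => contractionMatrix T τN hstar Cf CG N μ 1 1) atTop (nhds 0)) ∧
    (∃ B : ℝ, ∀ᶠ μ : ℝ in atTop, |contractionMatrix T τN hstar Cf CG N μ 0 1| ≤ B) ∧
    (∃ μ₀ : ℝ, 0 < μ₀ ∧ ∀ μ : ℝ, μ₀ ≤ μ →
      |Matrix.trace (contractionMatrix T τN hstar Cf CG N μ)| - 1 <
          Matrix.det (contractionMatrix T τN hstar Cf CG N μ) ∧
        Matrix.det (contractionMatrix T τN hstar Cf CG N μ) < 1) := by
  have hA := tendsto_contractionMatrix_atTop Cf CG hT hτN hhstar hN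
  have hentry (i j : Fin 2) :
      Tendsto (fun μ => contractionMatrix T τN hstar Cf CG N μ i j) atTop
        (𝓝 ((!![0, CG; 0, 0] : Matrix (Fin 2) (Fin 2) ℝ) i j)) :=
    tendsto_pi_nhds.1 (tendsto_pi_nhds.1 hA i) j
  obtain ⟨μ₁, hμ₁⟩ := eventually_atTop.1 <|
    Matrix.eventually_abs_trace_sub_one_lt_det_lt_one hA (by simp)
  refine ⟨by simpa using hentry 0 0, by simpa using hentry 1 0, by simpa using hentry 1 1,
    (hentry 0 1).abs.isBoundedUnder_le, max μ₁ 1, by positivity,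
    fun μ hμ => hμ₁ μ (le_of_max_le_left hμ)⟩

/-- **Conclusion of Lemma 3.2.** The entries `a₁₁(μ), a₂₁(μ), a₂₂(μ)` of the contraction
matrix `A(μ)` of (3.5) tend to `0` as `μ → ∞`, the entry `a₁₂(μ)` remains bounded, and
consequently there is `μ₀ > 0` such that for all `μ ≥ μ₀` the matrix `A(μ)` satisfies the
stability criterion `|trace A(μ)| − 1 < det A(μ) < 1`. -/
theorem contraction_matrix_stable_for_large_mu
    (T : ℝ) (hT : 0 < T) (N : ℕ) (hN : 1 ≤ N)
    (Cf CG : ℝ) (hCf : 0 ≤ Cf) (hCG : 0 ≤ CG)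
    (τN : ℝ) (hτN : 0 < τN) (hτNT : τN ≤ T) (hstar : ℝ) (hhstar : 0 < hstar) :
    (Tendsto (fun μ : ℝ => contractionMatrix T τN hstar Cf CG N μ 0 0) atTop (nhds 0)) ∧
    (Tendsto (fun μ : ℝ => contractionMatrix T τN hstar Cf CG N μ 1 0) atTop (nhds 0)) ∧
    (Tendsto (fun μ : ℝ => contractionMatrix T τN hstar Cf CG N μ 1 1) atTop (nhds 0)) ∧
    (∃ B : ℝ, ∀ᶠ μ : ℝ in atTop, |contractionMatrix T τN hstar Cf CG N μ 0 1| ≤ B) ∧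
    (∃ μ₀ : ℝ, 0 < μ₀ ∧ ∀ μ : ℝ, μ₀ ≤ μ →
      |Matrix.trace (contractionMatrix T τN hstar Cf CG N μ)| - 1 <
          Matrix.det (contractionMatrix T τN hstar Cf CG N μ) ∧
        Matrix.det (contractionMatrix T τN hstar Cf CG N μ) < 1) :=
  contraction_matrix_stable_for_large_mu_general T hT N hN Cf CG τN hτN hstar hhstar
end

section
/- With the impulsive Volterra setup (T > 0, times 0 = τ₀ < τ₁ < ⋯ < τ_N < τ_{N+1} = T, u(t) := a_i on [τ_{i−1},τ_i), h continuous, f and G continuous and Lipschitz in x with constants C_f, C_G), let x : [0,T] → ℝⁿ be the unique solution of the impulsive Volterra equation x(s) = h(s) + ∫₀^s f(s,t,x(t),u(t)) dt + ∑_{i : 0 < τ_i < s} G(s, τ_i, x(τ_i⁻), a_i, a_{i+1}). Define iterates by: ξ₍₀₎ any bounded function continuous on each (τ_{i−1},τ_i) with one-sided limits, η₍₀₎ ∈ (ℝⁿ)^N arbitrary, and for k ≥ 0: ξ₍k+1₎(s) := h(s) + ∫₀^s f(s,t,ξ₍k₎(t),u(t)) dt + ∑_{i : 0 < τ_i < s}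 G(s, τ_i, η₍k₎,i, a_i, a_{i+1}) and η₍k+1₎,i := h(τ_i) + ∫₀^{τ_i} f(τ_i,t,ξ₍k₎(t),u(t)) dt + ∑_{j=1}^{i−1} G(τ_i, τ_j, η₍k₎,j, a_j, a_{j+1}). Then for each i = 1,…,N+1 the supremum over t ∈ (τ_{i−1}, τ_i) of |ξ₍k₎(t) − x(t)| tends to 0 as k → ∞, and η₍k₎,i → x(τ_i⁻) as k → ∞ for each i = 1,…,N. -/
/-!
Write `eₖ(t) = ‖ξ₍k₎(t) - x(t)‖` and `dₖ(i) = ‖η₍k₎,i - x(τᵢ⁻)‖`. The solution is left-continuous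
at the impulse times, so `x(τᵢ⁻) = x(τᵢ)` and `η₍k+1₎,i` is the right-hand side of the scheme
evaluated at `s = τᵢ`. The Lipschitz bounds then give
  `eₖ₊₁(s) ≤ C_f ∫₀ˢ eₖ + C_G ∑_{τⱼ < s} dₖ(j)`,  `dₖ₊₁(i) ≤ C_f ∫₀^{τᵢ} eₖ + C_G ∑_{j < i} dₖ(j)`.
The jump terms carry no small factor, but in the second inequality they only involve earlier
impulse times. With `A = 4 C_G N + 1` and `λ` so large that `4 C_f A ≤ λ` and
`4 C_G N e^{λ τᵢ₋₁} ≤ e^{λ τᵢ}`, the bounds `eₖ(t) ≤ B A e^{λ t}`, `dₖ(i) ≤ B e^{λ τᵢ}` pass from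
`k` to `k + 1` with `B` halved: the exponential weight makes the Volterra terms small, the factor
`A` absorbs the jump terms of the first inequality, and the gap `τᵢ - τᵢ₋₁ > 0` those of the
second. So both errors decay geometrically, uniformly on `[0, T]`. The rest is regularity: the
iterates stay bounded and continuous between impulse times, hence integrable.
-/

open Set Filter Topology MeasureTheory

structure IsPartition (N : ℕ) (T : ℝ) (τ : ℕ → ℝ) : Prop where
  zero : τ 0 = 0
  last : τ (N + 1) = T
  strictMonoOn : StrictMonoOn τ (Iic (N + 1))

namespace IsPartition

variable {N : ℕ} {T : ℝ} {τ : ℕ → ℝ}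

lemma apply_le_apply (hP : IsPartition N T τ) {i j : ℕ} (hij : i ≤ j) (hj : j ≤ N + 1) :
    τ i ≤ τ j :=
  hP.strictMonoOn.monotoneOn (mem_Iic.2 (hij.trans hj)) (mem_Iic.2 hj) hij

lemma apply_mem_Icc (hP : IsPartition N T τ) {i : ℕ} (hi : i ≤ N + 1) : τ i ∈ Icc 0 T :=
  ⟨hP.zero ▸ hP.apply_le_apply i.zero_le hi, hP.last ▸ hP.apply_le_apply hi le_rfl⟩

lemma apply_sub_one_lt (hP : IsPartition N T τ) {i : ℕ} (hi1 : 1 ≤ i) (hi : i ≤ N + 1) :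
    τ (i - 1) < τ i :=
  hP.strictMonoOn (mem_Iic.2 (by omega)) (mem_Iic.2 hi) (by omega)

lemma Icc_apply_subset (hP : IsPartition N T τ) {i : ℕ} (hi : i ≤ N + 1) :
    Icc (τ (i - 1)) (τ i) ⊆ Icc 0 T :=
  Icc_subset_Icc (hP.apply_mem_Icc (by omega)).1 (hP.apply_mem_Icc hi).2

lemma exists_mem_Ioc (hP : IsPartition N T τ) {t : ℝ} (ht : t ∈ Ioc 0 T) :
    ∃ i, 1 ≤ i ∧ i ≤ N + 1 ∧ t ∈ Ioc (τ (i - 1)) (τ i) := by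
  classical
  have hex : ∃ i, t ≤ τ i := ⟨N + 1, hP.last ▸ ht.2⟩
  have hpos : Nat.find hex ≠ 0 := fun h0 => by
    have := Nat.find_spec hex
    rw [h0, hP.zero] at this
    linarith [ht.1]
  refine ⟨Nat.find hex, by omega, Nat.find_min' hex (hP.last ▸ ht.2), ?_, Nat.find_spec hex⟩
  exact not_le.1 (Nat.find_min hex (by omega))

lemma exists_mem_Ioo (hP : IsPartition N T τ) {t : ℝ} (ht : t ∈ Icc 0 T)
    (hgrid : t ∉ τ '' Iic (N + 1)) :
    ∃ i, 1 ≤ i ∧ i ≤ N + 1 ∧ t ∈ Ioo (τ (i - 1)) (τ i) := by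
  have ht0 : 0 < t := ht.1.lt_of_ne fun h => hgrid ⟨0, N.succ.zero_le, hP.zero.trans h⟩
  obtain ⟨i, hi1, hi, hti⟩ := hP.exists_mem_Ioc ⟨ht0, ht.2⟩
  exact ⟨i, hi1, hi, hti.1, hti.2.lt_of_ne fun h => hgrid ⟨i, hi, h.symm⟩⟩

lemma lt_of_apply_lt (hP : IsPartition N T τ) {i j : ℕ} (hi : i ≤ N + 1) (hj : j ≤ N + 1)
    (h : τ j < τ i) : j < i :=
  (hP.strictMonoOn.lt_iff_lt (mem_Iic.2 hj) (mem_Iic.2 hi)).1 h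

lemma filter_lt_eq (hP : IsPartition N T τ) {i : ℕ} (hi1 : 1 ≤ i) (hi : i ≤ N + 1) {s : ℝ}
    (hs : s ∈ Ioc (τ (i - 1)) (τ i)) :
    (Finset.Icc 1 N).filter (fun j => τ j < s) = Finset.Icc 1 (i - 1) := by
  ext j
  simp only [Finset.mem_filter, Finset.mem_Icc]
  constructor
  · rintro ⟨⟨hj1, hjN⟩, hjs⟩
    exact ⟨hj1, Nat.le_sub_one_of_lt (hP.lt_of_apply_lt hi (by omega) (hjs.trans_le hs.2))⟩
  · rintro ⟨hj1, hji⟩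
    exact ⟨⟨hj1, by omega⟩, (hP.apply_le_apply hji (by omega)).trans_lt hs.1⟩

lemma control_mem {A : Type*} {a : ℕ → A} {u : ℝ → A} (hP : IsPartition N T τ)
    (hu : ∀ i, 1 ≤ i → i ≤ N + 1 → ∀ t ∈ Ico (τ (i - 1)) (τ i), u t = a i) {t : ℝ}
    (ht : t ∈ Icc 0 T) (hgrid : t ∉ τ '' Iic (N + 1)) : u t ∈ a '' Icc 1 (N + 1) := by
  obtain ⟨i, hi1, hi, hti⟩ := hP.exists_mem_Ioo ht hgrid
  exact ⟨i, ⟨hi1, hi⟩, (hu i hi1 hi t (Ioo_subset_Ico_self hti)).symm⟩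

end IsPartition

lemma ContinuousOn.aestronglyMeasurable_of_sdiff_countable {α β : Type*} [TopologicalSpace α]
    [MeasurableSpace α] [OpensMeasurableSpace α] [MeasurableSingletonClass α]
    [TopologicalSpace β] [TopologicalSpace.PseudoMetrizableSpace β]
    [SecondCountableTopologyEither α β] {μ : Measure α} [NullSingletonClass μ] {g : α → β}
    {s F : Set α} (hg : ContinuousOn g (s \ F)) (hs : MeasurableSet s) (hF : F.Countable) :
    AEStronglyMeasurable g (μ.restrict s) := by
  rw [← Measure.restrict_congr_set (sdiff_null_ae_eq_self (hF.measure_zero μ))]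
  exact hg.aestronglyMeasurable (hs.diff hF.measurableSet)

lemma ContinuousOn.intervalIntegrable_of_sdiff_countable {E : Type*} [NormedAddCommGroup E]
    {g : ℝ → E} {c d M : ℝ} {F : Set ℝ} (hg : ContinuousOn g (Icc c d \ F)) (hcd : c ≤ d)
    (hF : F.Countable) (hM : ∀ t ∈ Icc c d \ F, ‖g t‖ ≤ M) :
    IntervalIntegrable g volume c d := by
  rw [intervalIntegrable_iff_integrableOn_Icc_of_le hcd]
  refine Integrable.of_bound (hg.aestronglyMeasurable_of_sdiff_countable measurableSet_Icc hF) M ?_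
  filter_upwards [ae_restrict_mem measurableSet_Icc, ae_restrict_of_ae (hF.ae_notMem volume)]
    with t htI htF using hM t ⟨htI, htF⟩

structure BddPiecewiseContinuous {E : Type*} [NormedAddCommGroup E] (N : ℕ) (T : ℝ)
    (τ : ℕ → ℝ) (g : ℝ → E) : Prop where
  continuousOn : ∀ i, 1 ≤ i → i ≤ N + 1 → ContinuousOn g (Ioo (τ (i - 1)) (τ i))
  bdd : ∃ M, ∀ t ∈ Icc 0 T, ‖g t‖ ≤ M

namespace BddPiecewiseContinuous

variable {E : Type*} [NormedAddCommGroup E] {N : ℕ} {T : ℝ} {τ : ℕ → ℝ} {g g' : ℝ → E}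

lemma sub (hg : BddPiecewiseContinuous N T τ g) (hg' : BddPiecewiseContinuous N T τ g') :
    BddPiecewiseContinuous N T τ (fun t => g t - g' t) := by
  obtain ⟨M, hM⟩ := hg.bdd
  obtain ⟨M', hM'⟩ := hg'.bdd
  exact ⟨fun i hi1 hi => (hg.continuousOn i hi1 hi).sub (hg'.continuousOn i hi1 hi),
    M + M', fun t ht => (norm_sub_le _ _).trans (add_le_add (hM t ht) (hM' t ht))⟩

lemma norm (hg : BddPiecewiseContinuous N T τ g) :
    BddPiecewiseContinuous N T τ (fun t => ‖g t‖) := by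
  obtain ⟨M, hM⟩ := hg.bdd
  exact ⟨fun i hi1 hi => (hg.continuousOn i hi1 hi).norm,
    M, fun t ht => (norm_norm (g t)).le.trans (hM t ht)⟩

lemma congr (hP : IsPartition N T τ) (hg : BddPiecewiseContinuous N T τ g)
    (h : EqOn g g' (Icc 0 T)) : BddPiecewiseContinuous N T τ g' := by
  obtain ⟨M, hM⟩ := hg.bdd
  refine ⟨fun i hi1 hi => (hg.continuousOn i hi1 hi).congr fun t ht => ?_,
    M, fun t ht => h ht ▸ hM t ht⟩
  exact (h (hP.Icc_apply_subset hi (Ioo_subset_Icc_self ht))).symm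

lemma continuousOn_diff (hP : IsPartition N T τ) (hg : BddPiecewiseContinuous N T τ g) :
    ContinuousOn g (Icc 0 T \ τ '' Iic (N + 1)) := by
  intro t ht
  obtain ⟨i, hi1, hi, hti⟩ := hP.exists_mem_Ioo ht.1 ht.2
  exact ((hg.continuousOn i hi1 hi).continuousAt (Ioo_mem_nhds hti.1 hti.2)).continuousWithinAt

lemma intervalIntegrable (hP : IsPartition N T τ) (hg : BddPiecewiseContinuous N T τ g)
    {c d : ℝ} (hc : 0 ≤ c) (hcd : c ≤ d) (hd : d ≤ T) : IntervalIntegrable g volume c d := by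
  obtain ⟨M, hM⟩ := hg.bdd
  have hsub : Icc c d \ τ '' Iic (N + 1) ⊆ Icc 0 T \ τ '' Iic (N + 1) :=
    sdiff_subset_sdiff_left (Icc_subset_Icc hc hd)
  exact ((hg.continuousOn_diff hP).mono hsub).intervalIntegrable_of_sdiff_countable hcd
    ((finite_Iic (N + 1)).image τ).countable fun t ht => hM t (hsub ht).1

lemma of_continuousOn_Icc (hP : IsPartition N T τ)
    (h : ∀ i, 1 ≤ i → i ≤ N + 1 → ∃ P : ℝ → E,
      ContinuousOn P (Icc (τ (i - 1)) (τ i)) ∧ EqOn g P (Ioc (τ (i - 1)) (τ i))) :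
    BddPiecewiseContinuous N T τ g := by
  refine ⟨fun i hi1 hi => ?_, ?_⟩
  · obtain ⟨P, hPc, hgP⟩ := h i hi1 hi
    exact (hPc.mono Ioo_subset_Icc_self).congr fun t ht => hgP (Ioo_subset_Ioc_self ht)
  have hcover : g '' Icc 0 T ⊆
      {g 0} ∪ ⋃ i ∈ Finset.Icc 1 (N + 1), g '' Ioc (τ (i - 1)) (τ i) := by
    rintro _ ⟨t, ht, rfl⟩
    rcases ht.1.eq_or_lt with rfl | ht0
    · exact Or.inl rfl
    obtain ⟨i, hi1, hi, hti⟩ := hP.exists_mem_Ioc ⟨ht0, ht.2⟩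
    exact Or.inr (mem_biUnion (Finset.mem_Icc.2 ⟨hi1, hi⟩) (mem_image_of_mem g hti))
  have hbdd : Bornology.IsBounded (g '' Icc 0 T) := by
    refine (Bornology.isBounded_singleton.union ?_).subset hcover
    refine (Bornology.isBounded_biUnion_finset _).2 fun i hi => ?_
    obtain ⟨hi1, hi⟩ := Finset.mem_Icc.1 hi
    obtain ⟨P, hPc, hgP⟩ := h i hi1 hi
    rw [hgP.image_eq]
    exact (isCompact_Icc.image_of_continuousOn hPc).isBounded.subset
      (image_mono Ioc_subset_Icc_self)
  obtain ⟨M, hM⟩ := isBounded_iff_forall_norm_le.1 hbdd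
  exact ⟨M, fun t ht => hM _ (mem_image_of_mem g ht)⟩

end BddPiecewiseContinuous

abbrev volterraTriangle (T : ℝ) : Set (ℝ × ℝ) := {st | 0 ≤ st.2 ∧ st.2 ≤ st.1 ∧ st.1 ≤ T}

lemma isCompact_volterraTriangle (T : ℝ) : IsCompact (volterraTriangle T) := by
  refine (isCompact_Icc (a := ((0 : ℝ), (0 : ℝ))) (b := (T, T))).of_isClosed_subset ?_ ?_
  · exact (isClosed_le continuous_const continuous_snd).inter
      ((isClosed_le continuous_snd continuous_fst).inter
        (isClosed_le continuous_fst continuous_const))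
  · rintro ⟨s, t⟩ ⟨h0, hts, hsT⟩
    exact ⟨⟨h0.trans hts, h0⟩, hsT, hts.trans hsT⟩

section VolterraIntegral

variable {E A : Type*} [NormedAddCommGroup E] [TopologicalSpace A] {N : ℕ} {T : ℝ}
  {τ : ℕ → ℝ} {U : Set A} {a : ℕ → A} {u : ℝ → A} {f : ℝ → ℝ → E → A → E} {g : ℝ → E}

lemma exists_norm_le_of_continuousOn [ProperSpace E]
    (hf : ContinuousOn (fun p : (ℝ × ℝ) × E × A => f p.1.1 p.1.2 p.2.1 p.2.2)
      (volterraTriangle T ×ˢ (univ ×ˢ U)))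
    {K : Set A} (hK : IsCompact K) (hKU : K ⊆ U) (R : ℝ) :
    ∃ M, 0 ≤ M ∧ ∀ s t x α, (s, t) ∈ volterraTriangle T → ‖x‖ ≤ R → α ∈ K →
      ‖f s t x α‖ ≤ M := by
  obtain ⟨M, hM⟩ := ((isCompact_volterraTriangle T).prod
    ((isCompact_closedBall (0 : E) R).prod hK)).exists_bound_of_continuousOn
    (hf.mono (prod_mono subset_rfl (prod_mono (subset_univ _) hKU)))
  exact ⟨max M 0, le_max_right _ _, fun s t x α hst hx hα =>
    (hM ((s, t), (x, α)) ⟨hst, mem_closedBall_zero_iff.2 hx, hα⟩).trans (le_max_left _ _)⟩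

lemma continuousWithinAt_indicator_Iic
    (hf : ContinuousOn (fun p : (ℝ × ℝ) × E × A => f p.1.1 p.1.2 p.2.1 p.2.2)
      (volterraTriangle T ×ˢ (univ ×ˢ U)))
    {x : E} {α : A} (hα : α ∈ U) {s₀ t : ℝ} (hs₀ : s₀ ∈ Icc 0 T) (ht : 0 ≤ t) (hts : t ≠ s₀) :
    ContinuousWithinAt (fun s => (Iic s).indicator (fun _ => f s t x α) t) (Icc 0 T) s₀ := by
  rcases hts.lt_or_gt with hlt | hgt
  · have hev : (fun s => (Iic s).indicator (fun _ => f s t x α) t) =ᶠ[𝓝[Icc 0 T] s₀]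
        fun s => f s t x α :=
      eventually_nhdsWithin_of_eventually_nhds <|
        (lt_mem_nhds hlt).mono fun s hs => indicator_of_mem (mem_Iic.2 hs.le) _
    have hpath : Continuous fun s : ℝ => ((s, t), (x, α)) := by fun_prop
    have hcont : ContinuousWithinAt (fun s => f s t x α) (Icc t T) s₀ :=
      (hf _ ⟨⟨ht, hlt.le, hs₀.2⟩, trivial, hα⟩).comp hpath.continuousWithinAt
        fun s hs => ⟨⟨ht, hs.1, hs.2⟩, trivial, hα⟩
    have hnhds : Icc t T ∈ 𝓝[Icc 0 T] s₀ :=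
      mem_nhdsWithin.2 ⟨Ioi t, isOpen_Ioi, hlt, fun s hs => ⟨hs.1.le, hs.2.2⟩⟩
    exact (hcont.mono_of_mem_nhdsWithin hnhds).congr_of_eventuallyEq hev
      (hev.eq_of_nhdsWithin hs₀)
  · have hev : (fun s => (Iic s).indicator (fun _ => f s t x α) t) =ᶠ[𝓝[Icc 0 T] s₀]
        fun _ => 0 :=
      eventually_nhdsWithin_of_eventually_nhds <|
        (gt_mem_nhds hgt).mono fun s hs => indicator_of_notMem (notMem_Iic.2 hs) _
    exact continuousWithinAt_const.congr_of_eventuallyEq hev (hev.eq_of_nhdsWithin hs₀)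

variable (hP : IsPartition N T τ) (haU : ∀ i, 1 ≤ i → i ≤ N + 1 → a i ∈ U)
  (hu : ∀ i, 1 ≤ i → i ≤ N + 1 → ∀ t ∈ Ico (τ (i - 1)) (τ i), u t = a i)
  (hf : ContinuousOn (fun p : (ℝ × ℝ) × E × A => f p.1.1 p.1.2 p.2.1 p.2.2)
    (volterraTriangle T ×ˢ (univ ×ˢ U)))
include hP haU hu hf

lemma continuousOn_volterraIntegrand (hg : BddPiecewiseContinuous N T τ g) {s : ℝ}
    (hs : s ≤ T) :
    ContinuousOn (fun t => f s t (g t) (u t)) (Icc 0 s \ τ '' Iic (N + 1)) := by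
  rintro t ⟨⟨ht0, hts⟩, hgrid⟩
  obtain ⟨i, hi1, hi, hti⟩ := hP.exists_mem_Ioo ⟨ht0, hts.trans hs⟩ hgrid
  have hpiece : Ioo (τ (i - 1)) (τ i) ∈ 𝓝 t := Ioo_mem_nhds hti.1 hti.2
  have hgt : ContinuousAt g t := (hg.continuousOn i hi1 hi).continuousAt hpiece
  have hfa : ContinuousWithinAt (fun t' => f s t' (g t') (a i)) (Icc 0 s) t :=
    (hf _ ⟨⟨ht0, hts, hs⟩, trivial, haU i hi1 hi⟩).comp
      ((continuousAt_const.prodMk continuousAt_id).prodMk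
        (hgt.prodMk continuousAt_const)).continuousWithinAt
      fun t' ht' => ⟨⟨ht'.1, ht'.2, hs⟩, trivial, haU i hi1 hi⟩
  have hua : (fun t' => f s t' (g t') (u t')) =ᶠ[𝓝[Icc 0 s] t] fun t' => f s t' (g t') (a i) :=
    eventually_nhdsWithin_of_eventually_nhds <| Filter.mem_of_superset hpiece fun t' ht' => by
      simp only [mem_ofPred_eq, hu i hi1 hi t' (Ioo_subset_Ico_self ht')]
  exact (hfa.congr_of_eventuallyEq hua (hua.eq_of_nhdsWithin ⟨ht0, hts⟩)).mono sdiff_subset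

variable [ProperSpace E]

lemma exists_bound_volterraIntegrand (hg : BddPiecewiseContinuous N T τ g) :
    ∃ M, 0 ≤ M ∧ ∀ s t, (s, t) ∈ volterraTriangle T → t ∉ τ '' Iic (N + 1) →
      ‖f s t (g t) (u t)‖ ≤ M := by
  obtain ⟨R, hR⟩ := hg.bdd
  obtain ⟨M, hM0, hM⟩ := exists_norm_le_of_continuousOn hf
    ((finite_Icc 1 (N + 1)).image a).isCompact (image_subset_iff.2 fun i hi => haU i hi.1 hi.2) R
  refine ⟨M, hM0, fun s t hst hgrid => ?_⟩
  have ht : t ∈ Icc 0 T := ⟨hst.1, hst.2.1.trans hst.2.2⟩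
  exact hM s t _ _ hst (hR t ht) (hP.control_mem hu ht hgrid)

lemma intervalIntegrable_volterraIntegrand (hg : BddPiecewiseContinuous N T τ g) {s : ℝ}
    (hs : s ∈ Icc 0 T) : IntervalIntegrable (fun t => f s t (g t) (u t)) volume 0 s := by
  obtain ⟨M, -, hM⟩ := exists_bound_volterraIntegrand hP haU hu hf hg
  exact (continuousOn_volterraIntegrand hP haU hu hf hg hs.2).intervalIntegrable_of_sdiff_countable
    hs.1 ((finite_Iic (N + 1)).image τ).countable fun t ht => hM s t ⟨ht.1.1, ht.1.2, hs.2⟩ ht.2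

variable [NormedSpace ℝ E]

lemma continuousOn_volterraIntegral (hg : BddPiecewiseContinuous N T τ g) :
    ContinuousOn (fun s => ∫ t in (0 : ℝ)..s, f s t (g t) (u t)) (Icc 0 T) := by
  obtain ⟨M, hM0, hM⟩ := exists_bound_volterraIntegrand hP haU hu hf hg
  -- `∫₀ˢ = ∫₀ᵀ 1_{t ≤ s}` moves the variable endpoint into the integrand, so that dominated
  -- convergence on the fixed interval `[0, T]` applies.
  refine ContinuousOn.congr
    (f := fun s => ∫ t in (0 : ℝ)..T, (Iic s).indicator (fun t => f s t (g t) (u t)) t)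
    (fun s₀ hs₀ => ?_) fun s hs => (intervalIntegral.integral_indicator hs).symm
  have hT : 0 ≤ T := hs₀.1.trans hs₀.2
  refine intervalIntegral.continuousWithinAt_of_dominated_interval (bound := fun _ => M) ?_ ?_
    intervalIntegrable_const ?_
  · filter_upwards [self_mem_nhdsWithin] with s hs
    rw [uIoc_of_le hT, aestronglyMeasurable_indicator_iff measurableSet_Iic,
      Measure.restrict_restrict measurableSet_Iic, Iic_inter_Ioc_of_le hs.2]
    exact (intervalIntegrable_volterraIntegrand hP haU hu hf hg hs).1.aestronglyMeasurable
  · filter_upwards [self_mem_nhdsWithin] with s hs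
    filter_upwards [((finite_Iic (N + 1)).image τ).countable.ae_notMem volume] with t hgrid ht
    rw [uIoc_of_le hT] at ht
    by_cases hts : t ≤ s
    · simpa [hts] using hM s t ⟨ht.1.le, hts, hs.2⟩ hgrid
    · simpa [hts] using hM0
  · filter_upwards [(((finite_Iic (N + 1)).image τ).countable.insert s₀).ae_notMem volume]
      with t hts ht
    rw [uIoc_of_le hT] at ht
    obtain ⟨hts₀, hgrid⟩ : t ≠ s₀ ∧ t ∉ τ '' Iic (N + 1) := by simpa using hts
    exact continuousWithinAt_indicator_Iic hf (image_subset_iff.2 (fun i hi => haU i hi.1 hi.2)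
      (hP.control_mem hu ⟨ht.1.le, ht.2⟩ hgrid)) hs₀ ht.1.le hts₀

end VolterraIntegral

section ImpulsiveVolterraMap

variable {E A : Type*} [NormedAddCommGroup E]
  {N : ℕ} {T : ℝ} {τ : ℕ → ℝ} {U : Set A} {a : ℕ → A} {u : ℝ → A} {h : ℝ → E}
  {f : ℝ → ℝ → E → A → E} {G : ℝ → ℝ → E → A → A → E}

lemma continuousOn_impulse [TopologicalSpace A] (hP : IsPartition N T τ)
    (haU : ∀ i, 1 ≤ i → i ≤ N + 1 → a i ∈ U)
    (hG : ContinuousOn (fun p : (ℝ × ℝ) × E × A × A => G p.1.1 p.1.2 p.2.1 p.2.2.1 p.2.2.2)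
      (volterraTriangle T ×ˢ (univ ×ˢ (U ×ˢ U))))
    {j : ℕ} (hj1 : 1 ≤ j) (hj : j ≤ N) (y : E) :
    ContinuousOn (fun s => G s (τ j) y (a j) (a (j + 1))) (Icc (τ j) T) := by
  have hpath : Continuous fun s : ℝ => ((s, τ j), (y, (a j, a (j + 1)))) := by fun_prop
  exact hG.comp hpath.continuousOn fun _ hs =>
    ⟨⟨(hP.apply_mem_Icc (by omega)).1, hs.1, hs.2⟩, trivial, haU j hj1 (by omega),
      haU (j + 1) (by omega) (by omega)⟩

variable [NormedSpace ℝ E]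

/-- The right-hand side `Φ g y` of the impulsive Volterra equation, with `y i` in place of
`x(τ_i⁻)`: the solution satisfies `x = Φ x (x(τ·⁻))` on `[0, T]`, and the scheme (3.6) reads
`ξ₍k+1₎ = Φ ξ₍k₎ η₍k₎`, `η₍k+1₎,i = Φ ξ₍k₎ η₍k₎ (τ_i)`. -/
noncomputable def impulsiveVolterraMap (N : ℕ) (τ : ℕ → ℝ) (a : ℕ → A) (u : ℝ → A)
    (h : ℝ → E) (f : ℝ → ℝ → E → A → E) (G : ℝ → ℝ → E → A → A → E) (g : ℝ → E) (y : ℕ → E)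
    (s : ℝ) : E :=
  h s + (∫ t in (0 : ℝ)..s, f s t (g t) (u t)) +
    ∑ i ∈ (Finset.Icc 1 N).filter (fun i => τ i < s), G s (τ i) (y i) (a i) (a (i + 1))

lemma impulsiveVolterraMap_of_mem_Ioc (hP : IsPartition N T τ) {i : ℕ} (hi1 : 1 ≤ i)
    (hi : i ≤ N + 1) (g : ℝ → E) (y : ℕ → E) {s : ℝ} (hs : s ∈ Ioc (τ (i - 1)) (τ i)) :
    impulsiveVolterraMap N τ a u h f G g y s = h s + (∫ t in (0 : ℝ)..s, f s t (g t) (u t)) +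
      ∑ j ∈ Finset.Icc 1 (i - 1), G s (τ j) (y j) (a j) (a (j + 1)) := by
  rw [impulsiveVolterraMap, hP.filter_lt_eq hi1 hi hs]

variable [TopologicalSpace A] [ProperSpace E] (hP : IsPartition N T τ)
  (haU : ∀ i, 1 ≤ i → i ≤ N + 1 → a i ∈ U)
  (hu : ∀ i, 1 ≤ i → i ≤ N + 1 → ∀ t ∈ Ico (τ (i - 1)) (τ i), u t = a i)
  (hf : ContinuousOn (fun p : (ℝ × ℝ) × E × A => f p.1.1 p.1.2 p.2.1 p.2.2)
    (volterraTriangle T ×ˢ (univ ×ˢ U)))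
include hP haU hu hf

lemma norm_impulsiveVolterraMap_sub_le {Cf CG : ℝ}
    (hfLip : ∀ s t : ℝ, 0 ≤ t → t ≤ s → s ≤ T → ∀ α ∈ U,
      ∀ x₁ x₂ : E, ‖f s t x₁ α - f s t x₂ α‖ ≤ Cf * ‖x₁ - x₂‖)
    (hGLip : ∀ s t : ℝ, 0 ≤ t → t ≤ s → s ≤ T → ∀ α ∈ U, ∀ β ∈ U,
      ∀ x₁ x₂ : E, ‖G s t x₁ α β - G s t x₂ α β‖ ≤ CG * ‖x₁ - x₂‖)
    {g g' : ℝ → E} (hg : BddPiecewiseContinuous N T τ g) (hg' : BddPiecewiseContinuous N T τ g')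
    (y y' : ℕ → E) {s : ℝ} (hs : s ∈ Icc 0 T) :
    ‖impulsiveVolterraMap N τ a u h f G g y s - impulsiveVolterraMap N τ a u h f G g' y' s‖ ≤
      Cf * (∫ t in (0 : ℝ)..s, ‖g t - g' t‖) +
        CG * ∑ j ∈ (Finset.Icc 1 N).filter (fun j => τ j < s), ‖y j - y' j‖ := by
  have hI := intervalIntegrable_volterraIntegrand hP haU hu hf hg hs
  have hI' := intervalIntegrable_volterraIntegrand hP haU hu hf hg' hs
  have hsplit : impulsiveVolterraMap N τ a u h f G g y s -
      impulsiveVolterraMap N τ a u h f G g' y' s =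
      (∫ t in (0 : ℝ)..s, (f s t (g t) (u t) - f s t (g' t) (u t))) +
        ∑ j ∈ (Finset.Icc 1 N).filter (fun j => τ j < s),
          (G s (τ j) (y j) (a j) (a (j + 1)) - G s (τ j) (y' j) (a j) (a (j + 1))) := by
    rw [impulsiveVolterraMap, impulsiveVolterraMap, intervalIntegral.integral_sub hI hI',
      Finset.sum_sub_distrib]
    abel
  rw [hsplit]
  refine (norm_add_le _ _).trans (add_le_add ?_ ?_)
  · have hLip : ∀ᵐ t ∂volume.restrict (Icc 0 s),
        ‖f s t (g t) (u t) - f s t (g' t) (u t)‖ ≤ Cf * ‖g t - g' t‖ := by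
      filter_upwards [ae_restrict_mem measurableSet_Icc,
        ae_restrict_of_ae (((finite_Iic (N + 1)).image τ).countable.ae_notMem volume)]
        with t ht hgrid
      exact hfLip s t ht.1 ht.2 hs.2 _ (image_subset_iff.2 (fun i hi => haU i hi.1 hi.2)
        (hP.control_mem hu ⟨ht.1, ht.2.trans hs.2⟩ hgrid)) _ _
    calc ‖∫ t in (0 : ℝ)..s, (f s t (g t) (u t) - f s t (g' t) (u t))‖
        ≤ ∫ t in (0 : ℝ)..s, ‖f s t (g t) (u t) - f s t (g' t) (u t)‖ :=
          intervalIntegral.norm_integral_le_integral_norm hs.1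
      _ ≤ ∫ t in (0 : ℝ)..s, Cf * ‖g t - g' t‖ :=
          intervalIntegral.integral_mono_ae_restrict hs.1 (hI.sub hI').norm
            (((hg.sub hg').norm.intervalIntegrable hP le_rfl hs.1 hs.2).const_mul Cf) hLip
      _ = Cf * ∫ t in (0 : ℝ)..s, ‖g t - g' t‖ := intervalIntegral.integral_const_mul _ _
  · rw [Finset.mul_sum]
    refine (norm_sum_le _ _).trans (Finset.sum_le_sum fun j hj => ?_)
    obtain ⟨⟨hj1, hj⟩, hjs⟩ := by simpa only [Finset.mem_filter, Finset.mem_Icc] using hj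
    exact hGLip s (τ j) (hP.apply_mem_Icc (by omega)).1 hjs.le hs.2 _ (haU j hj1 (by omega)) _
      (haU (j + 1) (by omega) (by omega)) _ _

variable (hh : ContinuousOn h (Icc 0 T))
  (hG : ContinuousOn (fun p : (ℝ × ℝ) × E × A × A => G p.1.1 p.1.2 p.2.1 p.2.2.1 p.2.2.2)
    (volterraTriangle T ×ˢ (univ ×ˢ (U ×ˢ U))))
include hh hG

lemma continuousOn_impulsiveVolterraMap_piece {g : ℝ → E} (hg : BddPiecewiseContinuous N T τ g)
    (y : ℕ → E) {i : ℕ} (hi1 : 1 ≤ i) (hi : i ≤ N + 1) :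
    ContinuousOn (fun s => h s + (∫ t in (0 : ℝ)..s, f s t (g t) (u t)) +
      ∑ j ∈ Finset.Icc 1 (i - 1), G s (τ j) (y j) (a j) (a (j + 1))) (Icc (τ (i - 1)) (τ i)) := by
  refine ((hh.add (continuousOn_volterraIntegral hP haU hu hf hg)).mono
    (hP.Icc_apply_subset hi)).add (continuousOn_finsetSum _ fun j hj => ?_)
  obtain ⟨hj1, hj⟩ := Finset.mem_Icc.1 hj
  exact (continuousOn_impulse hP haU hG hj1 (by omega) (y j)).mono
    (Icc_subset_Icc (hP.apply_le_apply hj (by omega)) (hP.apply_mem_Icc hi).2)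

lemma bddPiecewiseContinuous_impulsiveVolterraMap {g : ℝ → E}
    (hg : BddPiecewiseContinuous N T τ g) (y : ℕ → E) :
    BddPiecewiseContinuous N T τ (impulsiveVolterraMap N τ a u h f G g y) :=
  .of_continuousOn_Icc hP fun _ hi1 hi =>
    ⟨_, continuousOn_impulsiveVolterraMap_piece hP haU hu hf hh hG hg y hi1 hi,
      fun _ hs => impulsiveVolterraMap_of_mem_Ioc hP hi1 hi g y hs⟩

lemma continuousWithinAt_Iio_impulsiveVolterraMap {g : ℝ → E}
    (hg : BddPiecewiseContinuous N T τ g) (y : ℕ → E) {i : ℕ} (hi1 : 1 ≤ i) (hi : i ≤ N + 1) :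
    ContinuousWithinAt (impulsiveVolterraMap N τ a u h f G g y) (Iio (τ i)) (τ i) := by
  have hlt := hP.apply_sub_one_lt hi1 hi
  have hcont : ContinuousWithinAt (impulsiveVolterraMap N τ a u h f G g y)
      (Ioc (τ (i - 1)) (τ i)) (τ i) :=
    ((continuousOn_impulsiveVolterraMap_piece hP haU hu hf hh hG hg y hi1 hi).mono
      Ioc_subset_Icc_self |>.congr fun _ hs => impulsiveVolterraMap_of_mem_Ioc hP hi1 hi g y hs)
      (τ i) ⟨hlt, le_rfl⟩
  exact hcont.mono_of_mem_nhdsWithin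
    (Filter.mem_of_superset (Ioo_mem_nhdsLT hlt) Ioo_subset_Ioc_self)

lemma continuousWithinAt_Iio_of_eqOn_impulsiveVolterraMap {x : ℝ → E} {y : ℕ → E}
    (hx : BddPiecewiseContinuous N T τ x)
    (hxeq : EqOn x (impulsiveVolterraMap N τ a u h f G x y) (Icc 0 T)) {i : ℕ} (hi1 : 1 ≤ i)
    (hi : i ≤ N + 1) : ContinuousWithinAt x (Iio (τ i)) (τ i) := by
  have hΦ := continuousWithinAt_Iio_impulsiveVolterraMap hP haU hu hf hh hG hx y hi1 hi
  rw [ContinuousWithinAt, ← hxeq (hP.apply_mem_Icc hi)] at hΦ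
  refine hΦ.congr' ?_
  filter_upwards [Ioo_mem_nhdsLT (hP.apply_sub_one_lt hi1 hi)] with s hs
  exact (hxeq (hP.Icc_apply_subset hi (Ioo_subset_Icc_self hs))).symm

end ImpulsiveVolterraMap

section WeightedEstimate

open Real

variable {N : ℕ} {T : ℝ} {τ : ℕ → ℝ}

lemma IsPartition.exists_exponent_gap (hP : IsPartition N T τ) (c K : ℝ) :
    ∃ l, 0 < l ∧ K ≤ l ∧ ∀ i, 1 ≤ i → i ≤ N + 1 → c * exp (l * τ (i - 1)) ≤ exp (l * τ i) := by
  have hgap : ∀ i ∈ Finset.Icc 1 (N + 1),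
      ∀ᶠ l in atTop, c * exp (l * τ (i - 1)) ≤ exp (l * τ i) := by
    intro i hi
    obtain ⟨hi1, hi⟩ := Finset.mem_Icc.1 hi
    have hpos : 0 < τ i - τ (i - 1) := sub_pos.2 (hP.apply_sub_one_lt hi1 hi)
    filter_upwards
      [(tendsto_exp_atTop.comp (tendsto_id.atTop_mul_const hpos)).eventually_ge_atTop c] with l hl
    calc c * exp (l * τ (i - 1)) ≤ exp (l * (τ i - τ (i - 1))) * exp (l * τ (i - 1)) :=
          mul_le_mul_of_nonneg_right hl (exp_pos _).le
      _ = exp (l * τ i) := by rw [← exp_add]; ring_nf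
  obtain ⟨l, hl0, hlK, hl⟩ := ((eventually_gt_atTop 0).and
    ((eventually_ge_atTop K).and ((eventually_all_finset _).2 hgap))).exists
  exact ⟨l, hl0, hlK, fun i hi1 hi => hl i (Finset.mem_Icc.2 ⟨hi1, hi⟩)⟩

lemma integral_le_of_le_mul_exp {e : ℝ → ℝ} {C l s : ℝ} (hl : 0 < l) (hC : 0 ≤ C) (hs : 0 ≤ s)
    (hint : IntervalIntegrable e volume 0 s) (he : ∀ t ∈ Icc 0 s, e t ≤ C * exp (l * t)) :
    ∫ t in (0 : ℝ)..s, e t ≤ C * exp (l * s) / l := by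
  have hexp : ∫ t in (0 : ℝ)..s, exp (l * t) = (exp (l * s) - 1) / l := by
    rw [intervalIntegral.integral_comp_mul_left (fun t => exp t) hl.ne', integral_exp, mul_zero,
      exp_zero, smul_eq_mul]
    field_simp
  calc ∫ t in (0 : ℝ)..s, e t ≤ ∫ t in (0 : ℝ)..s, C * exp (l * t) :=
        intervalIntegral.integral_mono_on hs hint
          ((by fun_prop : Continuous fun t => C * exp (l * t)).intervalIntegrable _ _) he
    _ = C * ((exp (l * s) - 1) / l) := by rw [intervalIntegral.integral_const_mul, hexp]
    _ ≤ C * exp (l * s) / l := by rw [mul_div_assoc]; gcongr; linarith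

lemma sum_filter_le_mul_exp {d : ℕ → ℝ} {B l r s : ℝ} (hB : 0 ≤ B)
    (hd : ∀ j, 1 ≤ j → j ≤ N → d j ≤ B * exp (l * τ j))
    (hr : ∀ j ∈ (Finset.Icc 1 N).filter (fun j => τ j < s), τ j ≤ r) (hl : 0 ≤ l) :
    ∑ j ∈ (Finset.Icc 1 N).filter (fun j => τ j < s), d j ≤ N * (B * exp (l * r)) := by
  refine (Finset.sum_le_card_nsmul _ _ (B * exp (l * r)) fun j hj => ?_).trans ?_
  · obtain ⟨hj1, hjN⟩ := Finset.mem_Icc.1 (Finset.mem_filter.1 hj).1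
    exact (hd j hj1 hjN).trans (by gcongr; exact hr j hj)
  · rw [nsmul_eq_mul]
    gcongr
    exact_mod_cast (Finset.card_filter_le _ _).trans (Nat.card_Icc 1 N).le

lemma weighted_error_halves (hP : IsPartition N T τ) {e e' : ℝ → ℝ} {d d' : ℕ → ℝ}
    {Cf CG A l B : ℝ} (hCf : 0 ≤ Cf) (hCG : 0 ≤ CG) (hB : 0 ≤ B) (hl : 0 < l)
    (hA : 4 * CG * N + 1 ≤ A) (hlA : 4 * Cf * A ≤ l)
    (hgap : ∀ i, 1 ≤ i → i ≤ N + 1 → 4 * CG * N * exp (l * τ (i - 1)) ≤ exp (l * τ i))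
    (hint : ∀ s ∈ Icc 0 T, IntervalIntegrable e volume 0 s)
    (he : ∀ t ∈ Icc 0 T, e t ≤ B * A * exp (l * t))
    (hd : ∀ j, 1 ≤ j → j ≤ N → d j ≤ B * exp (l * τ j))
    (he' : ∀ s ∈ Icc 0 T, e' s ≤ Cf * (∫ t in (0 : ℝ)..s, e t) +
      CG * ∑ j ∈ (Finset.Icc 1 N).filter (fun j => τ j < s), d j)
    (hd' : ∀ i, 1 ≤ i → i ≤ N → d' i ≤ Cf * (∫ t in (0 : ℝ)..τ i, e t) +
      CG * ∑ j ∈ (Finset.Icc 1 N).filter (fun j => τ j < τ i), d j) :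
    (∀ t ∈ Icc 0 T, e' t ≤ B / 2 * A * exp (l * t)) ∧
      ∀ i, 1 ≤ i → i ≤ N → d' i ≤ B / 2 * exp (l * τ i) := by
  have hA1 : 1 ≤ A := by nlinarith [mul_nonneg hCG (Nat.cast_nonneg (α := ℝ) N)]
  have hvolterra : ∀ s ∈ Icc 0 T, Cf * ∫ t in (0 : ℝ)..s, e t ≤ B * exp (l * s) / 4 := by
    intro s hs
    have hint_le := integral_le_of_le_mul_exp hl (by nlinarith) hs.1 (hint s hs)
      fun t ht => he t ⟨ht.1, ht.2.trans hs.2⟩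
    calc Cf * ∫ t in (0 : ℝ)..s, e t ≤ Cf * (B * A * exp (l * s) / l) := by gcongr
      _ = 4 * Cf * A * (B * exp (l * s)) / (4 * l) := by ring
      _ ≤ l * (B * exp (l * s)) / (4 * l) := by gcongr
      _ = B * exp (l * s) / 4 := by field_simp
  refine ⟨fun s hs => ?_, fun i hi1 hi => ?_⟩
  · have hjump := sum_filter_le_mul_exp (r := s) hB hd (fun j hj => (Finset.mem_filter.1 hj).2.le)
      hl.le
    have hE : 0 ≤ B * exp (l * s) := by positivity
    calc e' s ≤ B * exp (l * s) / 4 + CG * (N * (B * exp (l * s))) :=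
          (he' s hs).trans (add_le_add (hvolterra s hs) (by gcongr))
      _ ≤ B / 2 * A * exp (l * s) := by
          nlinarith [mul_le_mul_of_nonneg_right hA hE, mul_nonneg (mul_nonneg hCG N.cast_nonneg) hE]
  · have hearlier : ∀ j ∈ (Finset.Icc 1 N).filter (fun j => τ j < τ i), τ j ≤ τ (i - 1) := by
      intro j hj
      obtain ⟨hj, hji⟩ := Finset.mem_filter.1 hj
      have hjN := (Finset.mem_Icc.1 hj).2
      exact hP.apply_le_apply
        (Nat.le_sub_one_of_lt (hP.lt_of_apply_lt (by omega) (by omega) hji)) (by omega)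
    have hjump := sum_filter_le_mul_exp hB hd hearlier hl.le
    have hgap' := mul_le_mul_of_nonneg_left (hgap i hi1 (by omega)) hB
    calc d' i ≤ B * exp (l * τ i) / 4 + CG * (N * (B * exp (l * τ (i - 1)))) :=
          (hd' i hi1 hi).trans
            (add_le_add (hvolterra _ (hP.apply_mem_Icc (by omega))) (by gcongr))
      _ ≤ B / 2 * exp (l * τ i) := by nlinarith

end WeightedEstimate

section Iteration

open Real

theorem exists_geometric_bound_of_error_recursion {N : ℕ} {T : ℝ} {τ : ℕ → ℝ}
    (hP : IsPartition N T τ) {e : ℕ → ℝ → ℝ} {d : ℕ → ℕ → ℝ} {Cf CG : ℝ} (hCf : 0 ≤ Cf)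
    (hCG : 0 ≤ CG) (hint : ∀ k, ∀ s ∈ Icc 0 T, IntervalIntegrable (e k) volume 0 s)
    (he₀ : ∃ R, ∀ t ∈ Icc 0 T, e 0 t ≤ R)
    (he : ∀ k, ∀ s ∈ Icc 0 T, e (k + 1) s ≤ Cf * (∫ t in (0 : ℝ)..s, e k t) +
      CG * ∑ j ∈ (Finset.Icc 1 N).filter (fun j => τ j < s), d k j)
    (hd : ∀ k i, 1 ≤ i → i ≤ N → d (k + 1) i ≤ Cf * (∫ t in (0 : ℝ)..τ i, e k t) +
      CG * ∑ j ∈ (Finset.Icc 1 N).filter (fun j => τ j < τ i), d k j) :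
    ∃ C, 0 ≤ C ∧ ∀ k, (∀ t ∈ Icc 0 T, e k t ≤ C * (1 / 2) ^ k) ∧
      ∀ i, 1 ≤ i → i ≤ N → d k i ≤ C * (1 / 2) ^ k := by
  set A := 4 * CG * N + 1
  have hA1 : 1 ≤ A := by nlinarith [mul_nonneg hCG (Nat.cast_nonneg (α := ℝ) N)]
  obtain ⟨l, hl0, hlA, hgap⟩ := hP.exists_exponent_gap (4 * CG * N) (4 * Cf * A)
  obtain ⟨R, hR⟩ := he₀
  set B := |R| + ∑ i ∈ Finset.Icc 1 N, |d 0 i|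
  have hB : 0 ≤ B := by positivity
  have hweighted : ∀ k, (∀ t ∈ Icc 0 T, e k t ≤ B * (1 / 2) ^ k * A * exp (l * t)) ∧
      ∀ i, 1 ≤ i → i ≤ N → d k i ≤ B * (1 / 2) ^ k * exp (l * τ i) := by
    intro k
    induction k with
    | zero =>
      have hBexp : ∀ t ∈ Icc 0 T, B ≤ B * exp (l * t) := fun t ht =>
        le_mul_of_one_le_right hB (one_le_exp (by nlinarith [ht.1]))
      refine ⟨fun t ht => ?_, fun i hi1 hi => ?_⟩
      · calc e 0 t ≤ B := (hR t ht).trans ((le_abs_self R).trans (le_add_of_nonneg_right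
              (by positivity)))
          _ ≤ B * exp (l * t) := hBexp t ht
          _ ≤ B * (1 / 2) ^ 0 * A * exp (l * t) := by
            rw [pow_zero, mul_one, mul_right_comm]
            exact le_mul_of_one_le_right (by positivity) hA1
      · calc d 0 i ≤ B := (le_abs_self _).trans ((Finset.single_le_sum (fun j _ => abs_nonneg
              (d 0 j)) (Finset.mem_Icc.2 ⟨hi1, hi⟩)).trans (le_add_of_nonneg_left (abs_nonneg R)))
          _ ≤ B * (1 / 2) ^ 0 * exp (l * τ i) := by
            rw [pow_zero, mul_one]; exact hBexp _ (hP.apply_mem_Icc (by omega))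
    | succ k ih =>
      have := weighted_error_halves hP hCf hCG (by positivity) hl0 le_rfl hlA hgap (hint k)
        ih.1 ih.2 (he k) (hd k)
      simpa only [pow_succ, mul_div_assoc, mul_one_div] using this
  refine ⟨B * A * exp (l * T), by positivity, fun k => ⟨fun t ht => ?_, fun i hi1 hi => ?_⟩⟩
  · calc e k t ≤ B * (1 / 2) ^ k * A * exp (l * t) := (hweighted k).1 t ht
      _ ≤ B * (1 / 2) ^ k * A * exp (l * T) := by gcongr; exact ht.2
      _ = B * A * exp (l * T) * (1 / 2) ^ k := by ring
  · calc d k i ≤ B * (1 / 2) ^ k * exp (l * τ i) := (hweighted k).2 i hi1 hi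
      _ ≤ B * (1 / 2) ^ k * (A * exp (l * T)) := by
        gcongr
        exact (exp_le_exp.2 (by gcongr; exact (hP.apply_mem_Icc (by omega)).2)).trans
          (le_mul_of_one_le_left (exp_pos _).le hA1)
      _ = B * A * exp (l * T) * (1 / 2) ^ k := by ring

variable {E A : Type*} [NormedAddCommGroup E] [NormedSpace ℝ E] [ProperSpace E]
  [TopologicalSpace A] {N : ℕ} {T : ℝ} {τ : ℕ → ℝ} {U : Set A} {a : ℕ → A} {u : ℝ → A}
  {h : ℝ → E} {f : ℝ → ℝ → E → A → E} {G : ℝ → ℝ → E → A → A → E}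

theorem impulsiveVolterraMap_iterate_error_le_geometric (hP : IsPartition N T τ)
    (haU : ∀ i, 1 ≤ i → i ≤ N + 1 → a i ∈ U)
    (hu : ∀ i, 1 ≤ i → i ≤ N + 1 → ∀ t ∈ Ico (τ (i - 1)) (τ i), u t = a i)
    (hf : ContinuousOn (fun p : (ℝ × ℝ) × E × A => f p.1.1 p.1.2 p.2.1 p.2.2)
      (volterraTriangle T ×ˢ (univ ×ˢ U)))
    (hh : ContinuousOn h (Icc 0 T))
    (hG : ContinuousOn (fun p : (ℝ × ℝ) × E × A × A => G p.1.1 p.1.2 p.2.1 p.2.2.1 p.2.2.2)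
      (volterraTriangle T ×ˢ (univ ×ˢ (U ×ˢ U))))
    {Cf CG : ℝ} (hCf : 0 ≤ Cf) (hCG : 0 ≤ CG)
    (hfLip : ∀ s t : ℝ, 0 ≤ t → t ≤ s → s ≤ T → ∀ α ∈ U,
      ∀ x₁ x₂ : E, ‖f s t x₁ α - f s t x₂ α‖ ≤ Cf * ‖x₁ - x₂‖)
    (hGLip : ∀ s t : ℝ, 0 ≤ t → t ≤ s → s ≤ T → ∀ α ∈ U, ∀ β ∈ U,
      ∀ x₁ x₂ : E, ‖G s t x₁ α β - G s t x₂ α β‖ ≤ CG * ‖x₁ - x₂‖)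
    {x : ℝ → E} {xlim : ℕ → E} (hx : BddPiecewiseContinuous N T τ x)
    (hxeq : EqOn x (impulsiveVolterraMap N τ a u h f G x xlim) (Icc 0 T))
    (hxlim : ∀ i, 1 ≤ i → i ≤ N → xlim i = x (τ i))
    {ξ : ℕ → ℝ → E} {η : ℕ → ℕ → E} (hξ0 : BddPiecewiseContinuous N T τ (ξ 0))
    (hξ : ∀ k, EqOn (ξ (k + 1)) (impulsiveVolterraMap N τ a u h f G (ξ k) (η k)) (Icc 0 T))
    (hη : ∀ k i, 1 ≤ i → i ≤ N →
      η (k + 1) i = impulsiveVolterraMap N τ a u h f G (ξ k) (η k) (τ i)) :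
    ∃ C, 0 ≤ C ∧ ∀ k, (∀ t ∈ Icc 0 T, ‖ξ k t - x t‖ ≤ C * (1 / 2) ^ k) ∧
      ∀ i, 1 ≤ i → i ≤ N → ‖η k i - xlim i‖ ≤ C * (1 / 2) ^ k := by
  have hξc : ∀ k, BddPiecewiseContinuous N T τ (ξ k) := fun k => by
    induction k with
    | zero => exact hξ0
    | succ k ih =>
      exact (bddPiecewiseContinuous_impulsiveVolterraMap hP haU hu hf hh hG ih (η k)).congr hP
        fun t ht => (hξ k ht).symm
  refine exists_geometric_bound_of_error_recursion (e := fun k t => ‖ξ k t - x t‖)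
    (d := fun k i => ‖η k i - xlim i‖) hP hCf hCG
    (fun k s hs => ((hξc k).sub hx).norm.intervalIntegrable hP le_rfl hs.1 hs.2)
    ((hξc 0).sub hx).bdd (fun k s hs => ?_) fun k i hi1 hi => ?_
  · rw [hξ k hs, hxeq hs]
    exact norm_impulsiveVolterraMap_sub_le hP haU hu hf hfLip hGLip (hξc k) hx _ _ hs
  · rw [hη k i hi1 hi, hxlim i hi1 hi, hxeq (hP.apply_mem_Icc (by omega))]
    exact norm_impulsiveVolterraMap_sub_le hP haU hu hf hfLip hGLip (hξc k) hx _ _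
      (hP.apply_mem_Icc (by omega))

end Iteration

theorem impulsive_volterra_iteration_converges_general
    (n m N : ℕ) (T : ℝ)
    (τ : ℕ → ℝ) (hτ0 : τ 0 = 0) (hτT : τ (N + 1) = T)
    (hτmono : ∀ i j : ℕ, i < j → j ≤ N + 1 → τ i < τ j)
    (U : Set (Fin m → ℝ)) (a : ℕ → (Fin m → ℝ)) (haU : ∀ i, 1 ≤ i → i ≤ N + 1 → a i ∈ U)
    (u : ℝ → (Fin m → ℝ))
    (hu : ∀ i, 1 ≤ i → i ≤ N + 1 → ∀ t ∈ Ico (τ (i - 1)) (τ i), u t = a i)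
    (h : ℝ → EuclideanSpace ℝ (Fin n)) (hh : ContinuousOn h (Icc 0 T))
    (f : ℝ → ℝ → EuclideanSpace ℝ (Fin n) → (Fin m → ℝ) → EuclideanSpace ℝ (Fin n))
    (G : ℝ → ℝ → EuclideanSpace ℝ (Fin n) → (Fin m → ℝ) → (Fin m → ℝ) →
      EuclideanSpace ℝ (Fin n))
    (hf : ContinuousOn
      (fun p : (ℝ × ℝ) × EuclideanSpace ℝ (Fin n) × (Fin m → ℝ) => f p.1.1 p.1.2 p.2.1 p.2.2)
      (({st : ℝ × ℝ | 0 ≤ st.2 ∧ st.2 ≤ st.1 ∧ st.1 ≤ T}) ×ˢ ((univ : Set _) ×ˢ U)))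
    (hG : ContinuousOn
      (fun p : (ℝ × ℝ) × EuclideanSpace ℝ (Fin n) × (Fin m → ℝ) × (Fin m → ℝ) =>
        G p.1.1 p.1.2 p.2.1 p.2.2.1 p.2.2.2)
      (({st : ℝ × ℝ | 0 ≤ st.2 ∧ st.2 ≤ st.1 ∧ st.1 ≤ T}) ×ˢ ((univ : Set _) ×ˢ (U ×ˢ U))))
    (Cf CG : ℝ)
    (hfLip : ∀ s t : ℝ, 0 ≤ t → t ≤ s → s ≤ T → ∀ α ∈ U,
      ∀ x₁ x₂ : EuclideanSpace ℝ (Fin n), ‖f s t x₁ α - f s t x₂ α‖ ≤ Cf * ‖x₁ - x₂‖)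
    (hGLip : ∀ s t : ℝ, 0 ≤ t → t ≤ s → s ≤ T → ∀ α ∈ U, ∀ β ∈ U,
      ∀ x₁ x₂ : EuclideanSpace ℝ (Fin n), ‖G s t x₁ α β - G s t x₂ α β‖ ≤ CG * ‖x₁ - x₂‖)
    -- the solution `x` of the impulsive Volterra equation, with left limits `xlim i = x(τ_i⁻)`:
    (x : ℝ → EuclideanSpace ℝ (Fin n)) (xlim : ℕ → EuclideanSpace ℝ (Fin n))
    (hxbdd : ∃ M : ℝ, ∀ t ∈ Icc 0 T, ‖x t‖ ≤ M)
    (hxcont : ∀ i, 1 ≤ i → i ≤ N + 1 → ContinuousOn x (Ioo (τ (i - 1)) (τ i)))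
    (hxlim : ∀ i, 1 ≤ i → i ≤ N + 1 →
      Tendsto x (nhdsWithin (τ i) (Iio (τ i))) (nhds (xlim i)))
    (hxeq : ∀ s ∈ Icc 0 T,
      x s = h s + (∫ t in (0:ℝ)..s, f s t (x t) (u t)) +
        ∑ i ∈ (Finset.Icc 1 N).filter (fun i => τ i < s),
          G s (τ i) (xlim i) (a i) (a (i + 1)))
    -- the iterates `(ξ₍k₎, η₍k₎)` of the scheme (3.6), with arbitrary admissible initial data:
    (ξ : ℕ → ℝ → EuclideanSpace ℝ (Fin n)) (η : ℕ → ℕ → EuclideanSpace ℝ (Fin n))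
    (hξ0bdd : ∃ M : ℝ, ∀ t ∈ Icc 0 T, ‖ξ 0 t‖ ≤ M)
    (hξ0cont : ∀ i, 1 ≤ i → i ≤ N + 1 → ContinuousOn (ξ 0) (Ioo (τ (i - 1)) (τ i)))
    (hξrec : ∀ k : ℕ, ∀ s ∈ Icc 0 T,
      ξ (k + 1) s = h s + (∫ t in (0:ℝ)..s, f s t (ξ k t) (u t)) +
        ∑ i ∈ (Finset.Icc 1 N).filter (fun i => τ i < s),
          G s (τ i) (η k i) (a i) (a (i + 1)))
    (hηrec : ∀ k : ℕ, ∀ i, 1 ≤ i → i ≤ N →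
      η (k + 1) i = h (τ i) + (∫ t in (0:ℝ)..(τ i), f (τ i) t (ξ k t) (u t)) +
        ∑ j ∈ Finset.Icc 1 (i - 1), G (τ i) (τ j) (η k j) (a j) (a (j + 1))) :
    (∀ i, 1 ≤ i → i ≤ N + 1 →
      Tendsto (fun k : ℕ => ⨆ t : Ioo (τ (i - 1)) (τ i), ‖ξ k t - x t‖) atTop (nhds 0)) ∧
    (∀ i, 1 ≤ i → i ≤ N → Tendsto (fun k : ℕ => η k i) atTop (nhds (xlim i))) := by
  have hP : IsPartition N T τ := ⟨hτ0, hτT, fun i _ j hj hij => hτmono i j hij hj⟩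
  have hx : BddPiecewiseContinuous N T τ x := ⟨hxcont, hxbdd⟩
  have hxlim' : ∀ i, 1 ≤ i → i ≤ N → xlim i = x (τ i) := fun i hi1 hi =>
    tendsto_nhds_unique (hxlim i hi1 (by omega))
      (continuousWithinAt_Iio_of_eqOn_impulsiveVolterraMap hP haU hu hf hh hG hx hxeq hi1
        (by omega))
  have hfLip' := fun s t h0 h1 h2 α hα x₁ x₂ => (hfLip s t h0 h1 h2 α hα x₁ x₂).trans
    (mul_le_mul_of_nonneg_right (le_max_left Cf 0) (norm_nonneg (x₁ - x₂)))
  have hGLip' := fun s t h0 h1 h2 α hα β hβ x₁ x₂ => (hGLip s t h0 h1 h2 α hα β hβ x₁ x₂).trans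
    (mul_le_mul_of_nonneg_right (le_max_left CG 0) (norm_nonneg (x₁ - x₂)))
  obtain ⟨C, hC0, hC⟩ := impulsiveVolterraMap_iterate_error_le_geometric hP haU hu hf hh hG
    (le_max_right Cf 0) (le_max_right CG 0) hfLip' hGLip' hx hxeq hxlim' ⟨hξ0cont, hξ0bdd⟩ hξrec
    fun k i hi1 hi => (hηrec k i hi1 hi).trans (impulsiveVolterraMap_of_mem_Ioc hP hi1 (by omega)
      _ _ ⟨hP.apply_sub_one_lt hi1 (by omega), le_rfl⟩).symm
  have hgeom : Tendsto (fun k : ℕ => C * (1 / 2) ^ k) atTop (nhds 0) := by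
    simpa using (tendsto_pow_atTop_nhds_zero_of_lt_one (r := (1 / 2 : ℝ)) (by norm_num)
      (by norm_num)).const_mul C
  refine ⟨fun i _ hi => squeeze_zero (fun k => Real.iSup_nonneg fun _ => norm_nonneg _)
    (fun k => Real.iSup_le (fun t => (hC k).1 t (hP.Icc_apply_subset hi (Ioo_subset_Icc_self t.2)))
      (by positivity)) hgeom, fun i hi1 hi => ?_⟩
  exact tendsto_iff_norm_sub_tendsto_zero.2
    (squeeze_zero (fun k => norm_nonneg _) (fun k => (hC k).2 i hi1 hi) hgeom)

/-- **Theorem 3.2.** The fixed-point iteration (3.6) for the impulsive Volterra equation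
converges to the solution: `sup_{t ∈ (τ_{i−1},τ_i)} |ξ₍k₎(t) − x(t)| → 0` for each subinterval,
and `η₍k₎,i → x(τ_i⁻)` for each `i = 1, …, N`. -/
theorem impulsive_volterra_iteration_converges
    (n m N : ℕ) (hN : 1 ≤ N) (T : ℝ) (hT : 0 < T)
    (τ : ℕ → ℝ) (hτ0 : τ 0 = 0) (hτT : τ (N + 1) = T)
    (hτmono : ∀ i j : ℕ, i < j → j ≤ N + 1 → τ i < τ j)
    (U : Set (Fin m → ℝ)) (a : ℕ → (Fin m → ℝ)) (haU : ∀ i, 1 ≤ i → i ≤ N + 1 → a i ∈ U)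
    (u : ℝ → (Fin m → ℝ))
    (hu : ∀ i, 1 ≤ i → i ≤ N + 1 → ∀ t ∈ Ico (τ (i - 1)) (τ i), u t = a i)
    (h : ℝ → EuclideanSpace ℝ (Fin n)) (hh : ContinuousOn h (Icc 0 T))
    (f : ℝ → ℝ → EuclideanSpace ℝ (Fin n) → (Fin m → ℝ) → EuclideanSpace ℝ (Fin n))
    (G : ℝ → ℝ → EuclideanSpace ℝ (Fin n) → (Fin m → ℝ) → (Fin m → ℝ) →
      EuclideanSpace ℝ (Fin n))
    (hf : ContinuousOn
      (fun p : (ℝ × ℝ) × EuclideanSpace ℝ (Fin n) × (Fin m → ℝ) => f p.1.1 p.1.2 p.2.1 p.2.2)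
      (({st : ℝ × ℝ | 0 ≤ st.2 ∧ st.2 ≤ st.1 ∧ st.1 ≤ T}) ×ˢ ((univ : Set _) ×ˢ U)))
    (hG : ContinuousOn
      (fun p : (ℝ × ℝ) × EuclideanSpace ℝ (Fin n) × (Fin m → ℝ) × (Fin m → ℝ) =>
        G p.1.1 p.1.2 p.2.1 p.2.2.1 p.2.2.2)
      (({st : ℝ × ℝ | 0 ≤ st.2 ∧ st.2 ≤ st.1 ∧ st.1 ≤ T}) ×ˢ ((univ : Set _) ×ˢ (U ×ˢ U))))
    (Cf CG : ℝ)
    (hfLip : ∀ s t : ℝ, 0 ≤ t → t ≤ s → s ≤ T → ∀ α ∈ U,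
      ∀ x₁ x₂ : EuclideanSpace ℝ (Fin n), ‖f s t x₁ α - f s t x₂ α‖ ≤ Cf * ‖x₁ - x₂‖)
    (hGLip : ∀ s t : ℝ, 0 ≤ t → t ≤ s → s ≤ T → ∀ α ∈ U, ∀ β ∈ U,
      ∀ x₁ x₂ : EuclideanSpace ℝ (Fin n), ‖G s t x₁ α β - G s t x₂ α β‖ ≤ CG * ‖x₁ - x₂‖)
    -- the solution `x` of the impulsive Volterra equation, with left limits `xlim i = x(τ_i⁻)`:
    (x : ℝ → EuclideanSpace ℝ (Fin n)) (xlim : ℕ → EuclideanSpace ℝ (Fin n))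
    (hxbdd : ∃ M : ℝ, ∀ t ∈ Icc 0 T, ‖x t‖ ≤ M)
    (hxcont : ∀ i, 1 ≤ i → i ≤ N + 1 → ContinuousOn x (Ioo (τ (i - 1)) (τ i)))
    (hxrlim : ∀ i, i ≤ N → ∃ Lp, Tendsto x (nhdsWithin (τ i) (Ioi (τ i))) (nhds Lp))
    (hxlim : ∀ i, 1 ≤ i → i ≤ N + 1 →
      Tendsto x (nhdsWithin (τ i) (Iio (τ i))) (nhds (xlim i)))
    (hxeq : ∀ s ∈ Icc 0 T,
      x s = h s + (∫ t in (0:ℝ)..s, f s t (x t) (u t)) +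
        ∑ i ∈ (Finset.Icc 1 N).filter (fun i => τ i < s),
          G s (τ i) (xlim i) (a i) (a (i + 1)))
    -- the iterates `(ξ₍k₎, η₍k₎)` of the scheme (3.6), with arbitrary admissible initial data:
    (ξ : ℕ → ℝ → EuclideanSpace ℝ (Fin n)) (η : ℕ → ℕ → EuclideanSpace ℝ (Fin n))
    (hξ0bdd : ∃ M : ℝ, ∀ t ∈ Icc 0 T, ‖ξ 0 t‖ ≤ M)
    (hξ0cont : ∀ i, 1 ≤ i → i ≤ N + 1 → ContinuousOn (ξ 0) (Ioo (τ (i - 1)) (τ i)))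
    (hξ0lim : (∀ i, i ≤ N → ∃ Lp, Tendsto (ξ 0) (nhdsWithin (τ i) (Ioi (τ i))) (nhds Lp)) ∧
      (∀ i, 1 ≤ i → i ≤ N + 1 →
        ∃ Lm, Tendsto (ξ 0) (nhdsWithin (τ i) (Iio (τ i))) (nhds Lm)))
    (hξrec : ∀ k : ℕ, ∀ s ∈ Icc 0 T,
      ξ (k + 1) s = h s + (∫ t in (0:ℝ)..s, f s t (ξ k t) (u t)) +
        ∑ i ∈ (Finset.Icc 1 N).filter (fun i => τ i < s),
          G s (τ i) (η k i) (a i) (a (i + 1)))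
    (hηrec : ∀ k : ℕ, ∀ i, 1 ≤ i → i ≤ N →
      η (k + 1) i = h (τ i) + (∫ t in (0:ℝ)..(τ i), f (τ i) t (ξ k t) (u t)) +
        ∑ j ∈ Finset.Icc 1 (i - 1), G (τ i) (τ j) (η k j) (a j) (a (j + 1))) :
    (∀ i, 1 ≤ i → i ≤ N + 1 →
      Tendsto (fun k : ℕ => ⨆ t : Ioo (τ (i - 1)) (τ i), ‖ξ k t - x t‖) atTop (nhds 0)) ∧
    (∀ i, 1 ≤ i → i ≤ N → Tendsto (fun k : ℕ => η k i) atTop (nhds (xlim i))) :=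
  impulsive_volterra_iteration_converges_general n m N T τ hτ0 hτT hτmono U a haU u hu h hh f G hf
    hG Cf CG hfLip hGLip x xlim hxbdd hxcont hxlim hxeq ξ η hξ0bdd hξ0cont hξrec hηrec
end

section
/- Let T > 0 and let K : ℝ → ℝ → Matrix (Fin n) (Fin n) ℝ be measurable with ‖K(s,t)‖ ≤ M for all 0 ≤ t ≤ s ≤ T, and let K^{*m} denote the iterated kernels with respect to the convolution (K₁ * K₂)(s,t) := ∫_t^s K₁(s,r)·K₂(r,t) dr. Then for each 0 ≤ t ≤ s ≤ T the series R(s,t) := ∑_{m=1}^∞ K^{*m}(s,t) converges absolutely with ‖R(s,t)‖ ≤ M e^{M(s−t)}, and for every continuous h : [0,T] → ℝⁿ the function x(s) := h(s) + ∫₀^s R(s,t)·h(t) dt satisfies the linear Volterra equation x(s) = h(s) + ∫₀^s K(s,t)·x(t) dt for all s ∈ [0,T]. -/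
open scoped Matrix
open Set

attribute [local instance] Matrix.linftyOpNormedAddCommGroup Matrix.linftyOpNormedSpace

/-- The convolution `(K₁ * K₂)(s,t) = ∫_t^s K₁(s,r)·K₂(r,t) dr` of two matrix kernels. -/
noncomputable def kernelConv {n : ℕ} (K₁ K₂ : ℝ → ℝ → Matrix (Fin n) (Fin n) ℝ) :
    ℝ → ℝ → Matrix (Fin n) (Fin n) ℝ :=
  fun s t => ∫ r in t..s, K₁ s r * K₂ r t

/-- The iterated kernels: `iterKernel K m = K^{*(m+1)}`, i.e. `iterKernel K 0 = K` and
`iterKernel K (m+1) = K * (iterKernel K m)`. -/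
noncomputable def iterKernel {n : ℕ} (K : ℝ → ℝ → Matrix (Fin n) (Fin n) ℝ) :
    ℕ → ℝ → ℝ → Matrix (Fin n) (Fin n) ℝ
  | 0 => K
  | m + 1 => kernelConv K (iterKernel K m)

/-- The resolvent kernel `R(s,t) = ∑_{m=1}^∞ K^{*m}(s,t)`. -/
noncomputable def resolventKernel {n : ℕ} (K : ℝ → ℝ → Matrix (Fin n) (Fin n) ℝ)
    (s t : ℝ) : Matrix (Fin n) (Fin n) ℝ :=
  ∑' m : ℕ, iterKernel K m s t

/-!
Truncating `K` to zero outside the triangle `0 ≤ t ≤ s ≤ T` changes neither its iterated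
kernels nor its resolvent on the triangle and makes it bounded everywhere, so we may assume
`‖K‖ ≤ M` on the whole plane. By induction `‖K^{*(m+1)}(s,t)‖ ≤ M^{m+1} |s-t|^m / m!`, which
gives absolute convergence of the resolvent series with the exponential bound, and dominated
convergence turns `R = ∑ K^{*(m+1)}` into the resolvent equation `R = K + K * R`. Applying this
to `h` and integrating, the Volterra equation reduces to exchanging the order of integration
over the triangle `0 < t < r ≤ s`.
-/

open MeasureTheory Function
open scoped Nat

section Matrix

variable {ι κ : Type*} [Fintype ι] [Fintype κ]

-- The topology of the linfty operator norm is only definitionally equal to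
-- `instTopologicalSpaceMatrix`, so instance search needs these two bridges.
noncomputable instance : ENormedAddCommMonoid (Matrix ι κ ℝ) :=
  NormedAddCommGroup.toENormedAddCommMonoid

instance : TopologicalSpace.PseudoMetrizableSpace (Matrix ι κ ℝ) :=
  inferInstanceAs (TopologicalSpace.PseudoMetrizableSpace (ι → κ → ℝ))

lemma Matrix.stronglyMeasurable_of_entries {α : Type*} [MeasurableSpace α]
    {f : α → Matrix ι κ ℝ} (hf : ∀ i j, Measurable fun a => f a i j) :
    StronglyMeasurable f :=
  show StronglyMeasurable fun a => (f a : ι → κ → ℝ) from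
    (measurable_pi_iff.2 fun i => measurable_pi_iff.2 (hf i)).stronglyMeasurable

lemma MeasureTheory.Integrable.bdd_mulVec {α : Type*} [MeasurableSpace α] {μ : Measure α}
    {A : α → Matrix ι κ ℝ} {v : α → κ → ℝ} {c : ℝ} (hv : Integrable v μ)
    (hA : AEStronglyMeasurable A μ) (hA_bound : ∀ᵐ x ∂μ, ‖A x‖ ≤ c) :
    Integrable (fun x => A x *ᵥ v x) μ :=
  (hv.norm.const_mul c).mono'
    ((continuous_fst.matrix_mulVec continuous_snd).comp_aestronglyMeasurable (hA.prodMk hv.1))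
    (hA_bound.mono fun _ hx =>
      (Matrix.linfty_opNorm_mulVec _ _).trans (mul_le_mul_of_nonneg_right hx (norm_nonneg _)))

lemma Matrix.intervalIntegral_mulVec {a b : ℝ} {f : ℝ → Matrix ι κ ℝ}
    (hf : IntervalIntegrable f volume a b) (v : κ → ℝ) :
    (∫ x in a..b, f x) *ᵥ v = ∫ x in a..b, f x *ᵥ v :=
  (((Matrix.mulVecBilin ℝ ℝ).flip v).toContinuousLinearMap.intervalIntegral_comp_comm hf).symm

lemma Matrix.mulVec_intervalIntegral {a b : ℝ} {v : ℝ → κ → ℝ}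
    (hv : IntervalIntegrable v volume a b) (A : Matrix ι κ ℝ) :
    A *ᵥ ∫ x in a..b, v x = ∫ x in a..b, A *ᵥ v x :=
  (A.mulVecLin.toContinuousLinearMap.intervalIntegral_comp_comm hv).symm

end Matrix

section EndpointMeasurability

variable {α E : Type*} [MeasurableSpace α] [NormedAddCommGroup E] [NormedSpace ℝ E]
  {f : α → ℝ → E} {a b : α → ℝ}

lemma MeasureTheory.StronglyMeasurable.setIntegral_Ioc (hf : StronglyMeasurable (uncurry f))
    (ha : Measurable a) (hb : Measurable b) :
    StronglyMeasurable fun x => ∫ r in Ioc (a x) (b x), f x r := by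
  have hS : MeasurableSet {p : α × ℝ | p.2 ∈ Ioc (a p.1) (b p.1)} :=
    (_root_.measurableSet_lt (ha.comp measurable_fst) measurable_snd).inter
      (_root_.measurableSet_le measurable_snd (hb.comp measurable_fst))
  convert (hf.indicator hS).integral_prod_right' (ν := volume) using 2 with x
  exact (integral_indicator (measurable_prodMk_left hS)).symm

lemma MeasureTheory.StronglyMeasurable.intervalIntegral (hf : StronglyMeasurable (uncurry f))
    (ha : Measurable a) (hb : Measurable b) :
    StronglyMeasurable fun x => ∫ r in a x..b x, f x r :=
  (hf.setIntegral_Ioc ha hb).sub (hf.setIntegral_Ioc hb ha)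

end EndpointMeasurability

section TriangleFubini

variable {E : Type*} [NormedAddCommGroup E] [NormedSpace ℝ E] {a b c : ℝ}

lemma intervalIntegral_indicator_Ioi {f : ℝ → E} (hc : c ∈ Icc a b) :
    ∫ x in a..b, (Ioi c).indicator f x = ∫ x in c..b, f x := by
  rw [intervalIntegral.integral_of_le (hc.1.trans hc.2), intervalIntegral.integral_of_le hc.2,
    setIntegral_indicator measurableSet_Ioi, Ioc_inter_Ioi, sup_eq_right.2 hc.1]

lemma intervalIntegral_indicator_Iio {f : ℝ → E} (hc : c ∈ Icc a b) :
    ∫ x in a..b, (Iio c).indicator f x = ∫ x in a..c, f x := by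
  rw [intervalIntegral.integral_of_le (hc.1.trans hc.2), intervalIntegral.integral_of_le hc.1,
    setIntegral_indicator measurableSet_Iio, integral_Ioc_eq_integral_Ioo]
  congr 2
  ext x
  simp only [mem_inter_iff, mem_Ioc, mem_Iio, mem_Ioo]
  exact ⟨fun hx => ⟨hx.1.1, hx.2⟩, fun hx => ⟨⟨hx.1, hx.2.le.trans hc.2⟩, hx.2⟩⟩

variable {F : ℝ → ℝ → E}

theorem intervalIntegral_triangle_swap (hab : a ≤ b)
    (hF : IntegrableOn (uncurry F) (Ioc a b ×ˢ Ioc a b)) :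
    ∫ t in a..b, ∫ r in t..b, F t r = ∫ r in a..b, ∫ t in a..r, F t r := by
  have hG : IntegrableOn (uncurry fun t r => (Ioi t).indicator (F t) r)
      (uIoc a b ×ˢ uIoc a b) := by
    rw [uIoc_of_le hab]
    exact hF.indicator (measurableSet_lt measurable_fst measurable_snd)
  calc ∫ t in a..b, ∫ r in t..b, F t r
      = ∫ t in a..b, ∫ r in a..b, (Ioi t).indicator (F t) r :=
        intervalIntegral.integral_congr fun t ht =>
          (intervalIntegral_indicator_Ioi (uIcc_of_le hab ▸ ht)).symm
    _ = ∫ r in a..b, ∫ t in a..b, (Iio r).indicator (F · r) t :=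
        intervalIntegral_intervalIntegral_swap hG
    _ = ∫ r in a..b, ∫ t in a..r, F t r :=
        intervalIntegral.integral_congr fun r hr =>
          intervalIntegral_indicator_Iio (uIcc_of_le hab ▸ hr)

theorem intervalIntegrable_intervalIntegral_triangle (hab : a ≤ b)
    (hF : IntegrableOn (uncurry F) (Ioc a b ×ˢ Ioc a b)) :
    IntervalIntegrable (fun r => ∫ t in a..r, F t r) volume a b := by
  have hG : Integrable (uncurry fun t r => (Iio r).indicator (F · r) t)
      ((volume.restrict (Ioc a b)).prod (volume.restrict (Ioc a b))) := by
    rw [Measure.prod_restrict, ← Measure.volume_eq_prod]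
    exact hF.indicator (measurableSet_lt measurable_fst measurable_snd)
  rw [intervalIntegrable_iff_integrableOn_Ioc_of_le hab]
  refine hG.integral_prod_right.congr (ae_restrict_of_forall_mem measurableSet_Ioc fun r hr => ?_)
  exact (intervalIntegral.integral_of_le hab).symm.trans <|
    intervalIntegral_indicator_Iio (Ioc_subset_Icc_self hr)

end TriangleFubini

lemma hasSum_pow_succ_mul_pow_div_factorial (M x : ℝ) :
    HasSum (fun m : ℕ => M ^ (m + 1) * x ^ m / m !) (M * Real.exp (M * x)) := by
  have h : (fun m : ℕ => M ^ (m + 1) * x ^ m / m !) = fun m => M * ((M * x) ^ m / m !) := by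
    ext m; ring
  rw [h, Real.exp_eq_exp_ℝ]
  exact (NormedSpace.expSeries_div_hasSum_exp (M * x)).mul_left M

variable {n : ℕ}

section Kernels

variable {K K₁ K₂ : ℝ → ℝ → Matrix (Fin n) (Fin n) ℝ} {M : ℝ}

lemma stronglyMeasurable_kernelConv (h₁ : StronglyMeasurable (uncurry K₁))
    (h₂ : StronglyMeasurable (uncurry K₂)) :
    StronglyMeasurable (uncurry (kernelConv K₁ K₂)) :=
  StronglyMeasurable.intervalIntegral (f := fun (p : ℝ × ℝ) r => K₁ p.1 r * K₂ r p.2)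
    ((h₁.comp_measurable (measurable_fst.fst.prodMk measurable_snd)).mul
      (h₂.comp_measurable (measurable_snd.prodMk measurable_fst.snd)))
    measurable_snd measurable_fst

lemma stronglyMeasurable_iterKernel (hK : StronglyMeasurable (uncurry K)) (m : ℕ) :
    StronglyMeasurable (uncurry (iterKernel K m)) := by
  induction m with
  | zero => exact hK
  | succ m ih => exact stronglyMeasurable_kernelConv hK ih

lemma norm_iterKernel_le (hKb : ∀ s t, ‖K s t‖ ≤ M) (m : ℕ) (s t : ℝ) :
    ‖iterKernel K m s t‖ ≤ M ^ (m + 1) * |s - t| ^ m / m ! := by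
  have hM : 0 ≤ M := (norm_nonneg _).trans (hKb 0 0)
  induction m generalizing s with
  | zero => simpa [iterKernel] using hKb s t
  | succ m ih =>
    have hle : ∀ r, ‖K s r * iterKernel K m r t‖ ≤ M ^ (m + 2) / m ! * |r - t| ^ m := fun r =>
      calc ‖K s r * iterKernel K m r t‖ ≤ ‖K s r‖ * ‖iterKernel K m r t‖ :=
          Matrix.linfty_opNorm_mul _ _
        _ ≤ M * (M ^ (m + 1) * |r - t| ^ m / m !) := by gcongr; exacts [hKb s r, ih r]
        _ = M ^ (m + 2) / m ! * |r - t| ^ m := by ring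
    calc ‖iterKernel K (m + 1) s t‖
        = ‖∫ r in uIoc t s, K s r * iterKernel K m r t‖ :=
          intervalIntegral.norm_integral_eq_norm_integral_uIoc _
      _ ≤ ∫ r in uIoc t s, M ^ (m + 2) / m ! * |r - t| ^ m :=
          norm_integral_le_of_norm_le (by fun_prop : Continuous _).integrableOn_uIoc
            (Filter.Eventually.of_forall hle)
      _ = M ^ (m + 2) * |s - t| ^ (m + 1) / (m + 1)! := by
          rw [integral_const_mul, integral_pow_abs_sub_uIoc, Nat.factorial_succ]
          push_cast
          field_simp

lemma summable_norm_iterKernel (hKb : ∀ s t, ‖K s t‖ ≤ M) (s t : ℝ) :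
    Summable fun m => ‖iterKernel K m s t‖ :=
  .of_nonneg_of_le (fun _ => norm_nonneg _) (norm_iterKernel_le hKb · s t)
    (hasSum_pow_succ_mul_pow_div_factorial M |s - t|).summable

lemma hasSum_iterKernel (hKb : ∀ s t, ‖K s t‖ ≤ M) (s t : ℝ) :
    HasSum (fun m => iterKernel K m s t) (resolventKernel K s t) :=
  (summable_norm_iterKernel hKb s t).of_norm.hasSum

lemma norm_resolventKernel_le (hKb : ∀ s t, ‖K s t‖ ≤ M) (s t : ℝ) :
    ‖resolventKernel K s t‖ ≤ M * Real.exp (M * |s - t|) :=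
  tsum_of_norm_bounded (hasSum_pow_succ_mul_pow_div_factorial M |s - t|)
    (norm_iterKernel_le hKb · s t)

lemma stronglyMeasurable_resolventKernel (hK : StronglyMeasurable (uncurry K))
    (hKb : ∀ s t, ‖K s t‖ ≤ M) : StronglyMeasurable (uncurry (resolventKernel K)) :=
  stronglyMeasurable_of_tendsto _
    (fun N => Finset.stronglyMeasurable_fun_sum (Finset.range N)
      fun m _ => stronglyMeasurable_iterKernel hK m)
    (tendsto_pi_nhds.2 fun p => (hasSum_iterKernel hKb p.1 p.2).tendsto_sum_nat)

lemma resolventKernel_eq_add_kernelConv (hK : StronglyMeasurable (uncurry K))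
    (hKb : ∀ s t, ‖K s t‖ ≤ M) (s t : ℝ) :
    resolventKernel K s t = K s t + kernelConv K (resolventKernel K) s t := by
  have hM : 0 ≤ M := (norm_nonneg _).trans (hKb 0 0)
  have htail :
      HasSum (fun m => iterKernel K (m + 1) s t) (kernelConv K (resolventKernel K) s t) := by
    refine intervalIntegral.hasSum_integral_of_dominated_convergence
      (fun m _ => M ^ (m + 2) * |s - t| ^ m / m !)
      (fun m => (hK.of_uncurry_left.mul
        (stronglyMeasurable_iterKernel hK m).of_uncurry_right).aestronglyMeasurable)
      (fun m => Filter.Eventually.of_forall fun r hr => ?_)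
      (Filter.Eventually.of_forall fun _ _ => ?_) intervalIntegrable_const
      (Filter.Eventually.of_forall fun r _ => (hasSum_iterKernel hKb r t).mul_left (K s r))
    · have hrt : |r - t| ≤ |s - t| := abs_sub_left_of_mem_uIcc (uIoc_subset_uIcc hr)
      calc ‖K s r * iterKernel K m r t‖ ≤ ‖K s r‖ * ‖iterKernel K m r t‖ :=
            Matrix.linfty_opNorm_mul _ _
        _ ≤ M * (M ^ (m + 1) * |s - t| ^ m / m !) := by
            gcongr
            · exact hKb s r
            · exact (norm_iterKernel_le hKb m r t).trans (by gcongr)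
        _ = M ^ (m + 2) * |s - t| ^ m / m ! := by ring
    · exact ((hasSum_pow_succ_mul_pow_div_factorial M |s - t|).summable.mul_left M).congr
        fun m => by ring
  exact (hasSum_iterKernel hKb s t).unique (HasSum.zero_add (f := (iterKernel K · s t)) htail)

end Kernels

section Volterra

variable {K : ℝ → ℝ → Matrix (Fin n) (Fin n) ℝ} {M : ℝ} {h : ℝ → Fin n → ℝ} {a s : ℝ}

lemma norm_resolventKernel_le_of_mem_Icc (hKb : ∀ s t, ‖K s t‖ ≤ M) {r t : ℝ}
    (hr : r ∈ Icc a s) (ht : t ∈ Icc a s) :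
    ‖resolventKernel K r t‖ ≤ M * Real.exp (M * (s - a)) := by
  have hM : 0 ≤ M := (norm_nonneg _).trans (hKb 0 0)
  refine (norm_resolventKernel_le hKb r t).trans ?_
  gcongr
  exact abs_sub_le_iff.2 ⟨by linarith [hr.2, ht.1], by linarith [hr.1, ht.2]⟩

lemma norm_mul_resolventKernel_le (hKb : ∀ s t, ‖K s t‖ ≤ M) {r t : ℝ}
    (hr : r ∈ Icc a s) (ht : t ∈ Icc a s) :
    ‖K s r * resolventKernel K r t‖ ≤ M * (M * Real.exp (M * (s - a))) :=
  (Matrix.linfty_opNorm_mul _ _).trans <|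
    mul_le_mul (hKb s r) (norm_resolventKernel_le_of_mem_Icc hKb hr ht) (norm_nonneg _)
      ((norm_nonneg _).trans (hKb 0 0))

lemma intervalIntegrable_resolventKernel_mulVec (hK : StronglyMeasurable (uncurry K))
    (hKb : ∀ s t, ‖K s t‖ ≤ M) (hh : IntegrableOn h (Ioc a s)) {r : ℝ} (hr : r ∈ Icc a s) :
    IntervalIntegrable (fun t => resolventKernel K r t *ᵥ h t) volume a r :=
  (intervalIntegrable_iff_integrableOn_Ioc_of_le hr.1).2 <|
    (hh.mono_set (Ioc_subset_Ioc_right hr.2)).bdd_mulVec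
      (stronglyMeasurable_resolventKernel hK hKb).of_uncurry_left.aestronglyMeasurable
      (ae_restrict_of_forall_mem measurableSet_Ioc fun _ ht =>
        norm_resolventKernel_le_of_mem_Icc hKb hr ⟨ht.1.le, ht.2.trans hr.2⟩)

lemma intervalIntegrable_mul_resolventKernel (hK : StronglyMeasurable (uncurry K))
    (hKb : ∀ s t, ‖K s t‖ ≤ M) {t : ℝ} (ht : t ∈ Icc a s) :
    IntervalIntegrable (fun r => K s r * resolventKernel K r t) volume t s :=
  (intervalIntegrable_iff_integrableOn_Ioc_of_le ht.2).2 <|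
    IntegrableOn.of_bound measure_Ioc_lt_top
      (hK.of_uncurry_left.mul
        (stronglyMeasurable_resolventKernel hK hKb).of_uncurry_right).aestronglyMeasurable _
      (ae_restrict_of_forall_mem measurableSet_Ioc fun _ hr =>
        norm_mul_resolventKernel_le hKb ⟨ht.1.trans hr.1.le, hr.2⟩ ht)

lemma integrableOn_mulVec_resolventKernel_mulVec (hK : StronglyMeasurable (uncurry K))
    (hKb : ∀ s t, ‖K s t‖ ≤ M) (hh : IntegrableOn h (Ioc a s)) :
    IntegrableOn (uncurry fun t r => K s r *ᵥ (resolventKernel K r t *ᵥ h t))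
      (Ioc a s ×ˢ Ioc a s) := by
  have hh' : IntegrableOn (fun p : ℝ × ℝ => h p.1) (Ioc a s ×ˢ Ioc a s) := by
    rw [IntegrableOn, Measure.volume_eq_prod, ← Measure.prod_restrict]
    exact hh.comp_fst _
  simp only [uncurry_def, Matrix.mulVec_mulVec]
  exact hh'.bdd_mulVec
    ((hK.of_uncurry_left.comp_measurable measurable_snd).mul
      ((stronglyMeasurable_resolventKernel hK hKb).comp_measurable
        measurable_swap)).aestronglyMeasurable
    (ae_restrict_of_forall_mem (measurableSet_Ioc.prod measurableSet_Ioc) fun p hp =>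
      norm_mul_resolventKernel_le hKb (Ioc_subset_Icc_self hp.2) (Ioc_subset_Icc_self hp.1))

lemma intervalIntegral_kernelConv_resolventKernel_mulVec (hK : StronglyMeasurable (uncurry K))
    (hKb : ∀ s t, ‖K s t‖ ≤ M) (has : a ≤ s) (hh : IntegrableOn h (Ioc a s)) :
    ∫ t in a..s, kernelConv K (resolventKernel K) s t *ᵥ h t =
      ∫ r in a..s, K s r *ᵥ ∫ t in a..r, resolventKernel K r t *ᵥ h t :=
  calc ∫ t in a..s, kernelConv K (resolventKernel K) s t *ᵥ h t
      = ∫ t in a..s, ∫ r in t..s, K s r *ᵥ (resolventKernel K r t *ᵥ h t) :=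
        intervalIntegral.integral_congr fun t ht => by
          simp only [kernelConv, Matrix.intervalIntegral_mulVec
            (intervalIntegrable_mul_resolventKernel hK hKb (uIcc_of_le has ▸ ht)),
            Matrix.mulVec_mulVec]
    _ = ∫ r in a..s, ∫ t in a..r, K s r *ᵥ (resolventKernel K r t *ᵥ h t) :=
        intervalIntegral_triangle_swap has (integrableOn_mulVec_resolventKernel_mulVec hK hKb hh)
    _ = ∫ r in a..s, K s r *ᵥ ∫ t in a..r, resolventKernel K r t *ᵥ h t :=
        intervalIntegral.integral_congr fun r hr => (Matrix.mulVec_intervalIntegral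
          (intervalIntegrable_resolventKernel_mulVec hK hKb hh (uIcc_of_le has ▸ hr)) _).symm

lemma intervalIntegrable_mulVec_intervalIntegral_resolventKernel
    (hK : StronglyMeasurable (uncurry K)) (hKb : ∀ s t, ‖K s t‖ ≤ M) (has : a ≤ s)
    (hh : IntegrableOn h (Ioc a s)) :
    IntervalIntegrable (fun r => K s r *ᵥ ∫ t in a..r, resolventKernel K r t *ᵥ h t)
      volume a s := by
  refine (intervalIntegrable_congr fun r hr => ?_).1 <|
    intervalIntegrable_intervalIntegral_triangle has
      (integrableOn_mulVec_resolventKernel_mulVec hK hKb hh)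
  rw [uIoc_of_le has] at hr
  exact (Matrix.mulVec_intervalIntegral (intervalIntegrable_resolventKernel_mulVec hK hKb hh
    (Ioc_subset_Icc_self hr)) _).symm

theorem intervalIntegral_resolventKernel_mulVec (hK : StronglyMeasurable (uncurry K))
    (hKb : ∀ s t, ‖K s t‖ ≤ M) (has : a ≤ s) (hh : IntegrableOn h (Ioc a s)) :
    ∫ t in a..s, resolventKernel K s t *ᵥ h t =
      ∫ t in a..s, K s t *ᵥ (h t + ∫ r in a..t, resolventKernel K t r *ᵥ h r) := by
  have hKh : IntervalIntegrable (fun t => K s t *ᵥ h t) volume a s :=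
    (intervalIntegrable_iff_integrableOn_Ioc_of_le has).2 <|
      hh.bdd_mulVec hK.of_uncurry_left.aestronglyMeasurable (.of_forall (hKb s))
  calc ∫ t in a..s, resolventKernel K s t *ᵥ h t
      = (∫ t in a..s, K s t *ᵥ h t) +
          ∫ t in a..s, kernelConv K (resolventKernel K) s t *ᵥ h t := by
        refine eq_add_of_sub_eq' ?_
        rw [← intervalIntegral.integral_sub
          (intervalIntegrable_resolventKernel_mulVec hK hKb hh ⟨has, le_rfl⟩) hKh]
        refine intervalIntegral.integral_congr fun t _ => ?_
        rw [resolventKernel_eq_add_kernelConv hK hKb s t, Matrix.add_mulVec, add_sub_cancel_left]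
    _ = ∫ t in a..s, K s t *ᵥ (h t + ∫ r in a..t, resolventKernel K t r *ᵥ h r) := by
        rw [intervalIntegral_kernelConv_resolventKernel_mulVec hK hKb has hh,
          ← intervalIntegral.integral_add hKh
            (intervalIntegrable_mulVec_intervalIntegral_resolventKernel hK hKb has hh)]
        simp only [Matrix.mulVec_add]

end Volterra

section Truncation

def triangle (a b : ℝ) : Set (ℝ × ℝ) := {p | a ≤ p.2 ∧ p.2 ≤ p.1 ∧ p.1 ≤ b}

lemma measurableSet_triangle (a b : ℝ) : MeasurableSet (triangle a b) :=
  (measurableSet_le measurable_const measurable_snd).inter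
    ((measurableSet_le measurable_snd measurable_fst).inter
      (measurableSet_le measurable_fst measurable_const))

variable {K : ℝ → ℝ → Matrix (Fin n) (Fin n) ℝ} {a b M : ℝ}

noncomputable def truncKernel (K : ℝ → ℝ → Matrix (Fin n) (Fin n) ℝ) (a b : ℝ) :
    ℝ → ℝ → Matrix (Fin n) (Fin n) ℝ :=
  fun s t => (triangle a b).indicator (uncurry K) (s, t)

lemma truncKernel_of_mem {s t : ℝ} (hst : (s, t) ∈ triangle a b) :
    truncKernel K a b s t = K s t :=
  indicator_of_mem hst _

lemma stronglyMeasurable_truncKernel (hK : StronglyMeasurable (uncurry K)) :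
    StronglyMeasurable (uncurry (truncKernel K a b)) :=
  hK.indicator (measurableSet_triangle a b)

lemma norm_truncKernel_le (hKb : ∀ s t, a ≤ t → t ≤ s → s ≤ b → ‖K s t‖ ≤ M)
    (hne : (triangle a b).Nonempty) (s t : ℝ) : ‖truncKernel K a b s t‖ ≤ M := by
  by_cases hst : (s, t) ∈ triangle a b
  · rw [truncKernel_of_mem hst]
    exact hKb s t hst.1 hst.2.1 hst.2.2
  · obtain ⟨p, hp⟩ := hne
    rw [truncKernel, indicator_of_notMem hst, norm_zero]
    exact (norm_nonneg _).trans (hKb p.1 p.2 hp.1 hp.2.1 hp.2.2)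

lemma iterKernel_truncKernel (m : ℕ) {s t : ℝ} (hst : (s, t) ∈ triangle a b) :
    iterKernel (truncKernel K a b) m s t = iterKernel K m s t := by
  induction m generalizing s with
  | zero => exact truncKernel_of_mem hst
  | succ m ih =>
    refine intervalIntegral.integral_congr fun r hr => ?_
    rw [uIcc_of_le hst.2.1] at hr
    simp only [truncKernel_of_mem (⟨hst.1.trans hr.1, hr.2, hst.2.2⟩ : (s, r) ∈ triangle a b),
      ih (s := r) ⟨hst.1, hr.1, hr.2.trans hst.2.2⟩]

lemma resolventKernel_truncKernel {s t : ℝ} (hst : (s, t) ∈ triangle a b) :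
    resolventKernel (truncKernel K a b) s t = resolventKernel K s t :=
  tsum_congr fun m => iterKernel_truncKernel m hst

variable {s t : ℝ}

lemma summable_norm_iterKernel_of_mem_triangle
    (hKb : ∀ s t, a ≤ t → t ≤ s → s ≤ b → ‖K s t‖ ≤ M) (hst : (s, t) ∈ triangle a b) :
    Summable fun m => ‖iterKernel K m s t‖ := by
  simpa only [iterKernel_truncKernel _ hst] using
    summable_norm_iterKernel (norm_truncKernel_le hKb ⟨_, hst⟩) s t

lemma norm_resolventKernel_le_of_mem_triangle
    (hKb : ∀ s t, a ≤ t → t ≤ s → s ≤ b → ‖K s t‖ ≤ M) (hst : (s, t) ∈ triangle a b) :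
    ‖resolventKernel K s t‖ ≤ M * Real.exp (M * (s - t)) := by
  rw [← resolventKernel_truncKernel hst, ← abs_of_nonneg (sub_nonneg.2 hst.2.1)]
  exact norm_resolventKernel_le (norm_truncKernel_le hKb ⟨_, hst⟩) s t

theorem intervalIntegral_resolventKernel_mulVec_of_triangle
    (hK : StronglyMeasurable (uncurry K))
    (hKb : ∀ s t, a ≤ t → t ≤ s → s ≤ b → ‖K s t‖ ≤ M) {h : ℝ → Fin n → ℝ}
    (hs : s ∈ Icc a b) (hh : IntegrableOn h (Ioc a s)) :
    ∫ t in a..s, resolventKernel K s t *ᵥ h t =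
      ∫ t in a..s, K s t *ᵥ (h t + ∫ r in a..t, resolventKernel K t r *ᵥ h r) := by
  have hst {t : ℝ} (ht : t ∈ uIcc a s) : (s, t) ∈ triangle a b := by
    rw [uIcc_of_le hs.1] at ht
    exact ⟨ht.1, ht.2, hs.2⟩
  have htr {t r : ℝ} (ht : t ∈ uIcc a s) (hr : r ∈ uIcc a t) : (t, r) ∈ triangle a b := by
    rw [uIcc_of_le (hst ht).1] at hr
    exact ⟨hr.1, hr.2, (hst ht).2.1.trans hs.2⟩
  calc ∫ t in a..s, resolventKernel K s t *ᵥ h t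
      = ∫ t in a..s, resolventKernel (truncKernel K a b) s t *ᵥ h t :=
        intervalIntegral.integral_congr fun t ht => by
          simp only [resolventKernel_truncKernel (hst ht)]
    _ = ∫ t in a..s, truncKernel K a b s t *ᵥ
          (h t + ∫ r in a..t, resolventKernel (truncKernel K a b) t r *ᵥ h r) :=
        intervalIntegral_resolventKernel_mulVec (stronglyMeasurable_truncKernel hK)
          (norm_truncKernel_le hKb ⟨_, hst left_mem_uIcc⟩) hs.1 hh
    _ = ∫ t in a..s, K s t *ᵥ (h t + ∫ r in a..t, resolventKernel K t r *ᵥ h r) :=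
        intervalIntegral.integral_congr fun t ht => by
          rw [truncKernel_of_mem (hst ht), intervalIntegral.integral_congr fun r hr =>
            congrArg (· *ᵥ h r) (resolventKernel_truncKernel (htr ht hr))]

end Truncation

theorem resolvent_solves_linear_volterra_general
    (n : ℕ) (T : ℝ)
    (K : ℝ → ℝ → Matrix (Fin n) (Fin n) ℝ)
    (hmeas : ∀ i j : Fin n, Measurable (fun p : ℝ × ℝ => K p.1 p.2 i j))
    (M : ℝ) (hbound : ∀ s t : ℝ, 0 ≤ t → t ≤ s → s ≤ T → ‖K s t‖ ≤ M) :
    (∀ s t : ℝ, 0 ≤ t → t ≤ s → s ≤ T →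
      Summable (fun m : ℕ => ‖iterKernel K m s t‖) ∧
      ‖resolventKernel K s t‖ ≤ M * Real.exp (M * (s - t))) ∧
    (∀ h : ℝ → (Fin n → ℝ), ContinuousOn h (Icc 0 T) →
      ∀ s ∈ Icc 0 T,
        (h s + ∫ t in (0:ℝ)..s, (resolventKernel K s t).mulVec (h t)) =
          h s + ∫ t in (0:ℝ)..s, (K s t).mulVec
            (h t + ∫ r in (0:ℝ)..t, (resolventKernel K t r).mulVec (h r))) := by
  refine ⟨fun s t ht hts hsT => ?_, fun h hh s hs => ?_⟩
  · exact ⟨summable_norm_iterKernel_of_mem_triangle hbound ⟨ht, hts, hsT⟩,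
      norm_resolventKernel_le_of_mem_triangle hbound ⟨ht, hts, hsT⟩⟩
  · congr 1
    exact intervalIntegral_resolventKernel_mulVec_of_triangle
      (Matrix.stronglyMeasurable_of_entries hmeas) hbound hs
      ((hh.mono (Icc_subset_Icc_right hs.2)).integrableOn_Icc.mono_set Ioc_subset_Icc_self)

/-- **Theorem 4.3, solution representation (equations (4.16)–(4.17)).** For a measurable kernel
with `‖K(s,t)‖ ≤ M` on the triangle, the resolvent series `R(s,t) = ∑_{m≥1} K^{*m}(s,t)`
converges absolutely with `‖R(s,t)‖ ≤ M e^{M(s−t)}`, and for every continuous `h` the function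
`x(s) = h(s) + ∫₀ˢ R(s,t)·h(t) dt` solves the linear Volterra equation
`x(s) = h(s) + ∫₀ˢ K(s,t)·x(t) dt`. -/
theorem resolvent_solves_linear_volterra
    (n : ℕ) (T : ℝ) (hT : 0 < T)
    (K : ℝ → ℝ → Matrix (Fin n) (Fin n) ℝ)
    (hmeas : ∀ i j : Fin n, Measurable (fun p : ℝ × ℝ => K p.1 p.2 i j))
    (M : ℝ) (hbound : ∀ s t : ℝ, 0 ≤ t → t ≤ s → s ≤ T → ‖K s t‖ ≤ M) :
    (∀ s t : ℝ, 0 ≤ t → t ≤ s → s ≤ T →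
      Summable (fun m : ℕ => ‖iterKernel K m s t‖) ∧
      ‖resolventKernel K s t‖ ≤ M * Real.exp (M * (s - t))) ∧
    (∀ h : ℝ → (Fin n → ℝ), ContinuousOn h (Icc 0 T) →
      ∀ s ∈ Icc 0 T,
        (h s + ∫ t in (0:ℝ)..s, (resolventKernel K s t).mulVec (h t)) =
          h s + ∫ t in (0:ℝ)..s, (K s t).mulVec
            (h t + ∫ r in (0:ℝ)..t, (resolventKernel K t r).mulVec (h r))) :=
  resolvent_solves_linear_volterra_general n T K hmeas M hbound
end
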